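/- arXiv:1209.5067 — 7 statements merged into one kernel-verified Lean document; each statement's English description precedes it below -/
import Mathlib

section
/- For each p ≥ 0, the number of partitions of 2p+1 into at most k parts with exactly one odd part equals the sum over i from 0 to k-1 of the number of partitions of 2p - 2i into at most k parts with all parts even. -/
/-!
Write `Q(k, n)` for the number of partitions of `n` into at most `k` parts. Removing the odd
part `2a + 1` and halving the remaining even parts shows that the left side is
`∑_{a ≤ p} Q(k - 1, p - a)`, and halving shows that the `i`-th summand on the right is
`Q(k, p - i)`. Both sums then grow by `Q(k - 1, p)` when `p` increases by one, because of the
recurrence `Q(k, n) = Q(k - 1, n) + Q(k, n - k)`: a partition into at most `k` parts either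
has a zero part, or all of its `k` parts are positive and can be lowered by one.
-/

theorem Multiset.exists_map_eq_of_forall_mem {α β : Type*} {f : α → β} {s : Multiset β}
    (h : ∀ x ∈ s, ∃ a, f a = x) : ∃ t : Multiset α, t.map f = s := by
  induction s using Multiset.induction_on with
  | empty => exact ⟨0, rfl⟩
  | cons b s ih =>
    obtain ⟨a, rfl⟩ := h b (mem_cons_self _ _)
    obtain ⟨t, rfl⟩ := ih fun x hx => h x (mem_cons_of_mem hx)
    exact ⟨a ::ₘ t, map_cons _ _ _⟩

theorem Multiset.sum_map_two_mul (t : Multiset ℕ) : (t.map (2 * ·)).sum = 2 * t.sum := by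
  simpa using Multiset.sum_map_mul_left (s := t) (a := 2) (f := id)

theorem Multiset.sum_map_add_one (t : Multiset ℕ) : (t.map (· + 1)).sum = t.sum + card t := by
  simp [Multiset.sum_map_add]

section Telescoping

variable {M : Type*} [AddCancelCommMonoid M] {f g : ℤ → M} {m : ℕ}

theorem sum_range_sub_eq_add_sum_range_sub_one (hg : ∀ n, g n = f n + g (n - m)) (n : ℤ) :
    ∑ i ∈ Finset.range m, g (n - i) = f n + ∑ i ∈ Finset.range m, g (n - 1 - i) := by
  apply add_right_cancel (b := g (n - m))
  calc ∑ i ∈ Finset.range m, g (n - i) + g (n - m)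
      = g n + ∑ i ∈ Finset.range m, g (n - 1 - i) := by
        rw [← Finset.sum_range_succ (fun i : ℕ => g (n - i)), Finset.sum_range_succ']
        push_cast
        simp only [sub_add_eq_sub_sub, sub_zero, sub_right_comm _ _ (1 : ℤ), add_comm]
    _ = f n + ∑ i ∈ Finset.range m, g (n - 1 - i) + g (n - m) := by
        rw [hg n, add_right_comm]

theorem sum_range_sub_eq_sum_range_sub (hg : ∀ n, g n = f n + g (n - m))
    (hg_neg : ∀ n < 0, g n = 0) (p : ℕ) :
    ∑ a ∈ Finset.range (p + 1), f (p - a) = ∑ i ∈ Finset.range m, g (p - i) := by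
  induction p with
  | zero =>
    rw [sum_range_sub_eq_add_sum_range_sub_one hg,
      Finset.sum_eq_zero fun i _ => hg_neg _ (by omega)]
    simp
  | succ p ih =>
    rw [Finset.sum_range_succ', sum_range_sub_eq_add_sum_range_sub_one hg, add_comm]
    push_cast
    simp only [add_sub_add_right_eq_sub, sub_zero, add_sub_cancel_right, ih]

end Telescoping

/-- Counted with an integer target, so that `partitionCount k n = 0` for `n < 0`. -/
noncomputable def partitionCount (k : ℕ) (n : ℤ) : ℕ :=
  Nat.card {s : Multiset ℕ // Multiset.card s = k ∧ (s.sum : ℤ) = n}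

instance finite_multisets_card_sum (k : ℕ) (n : ℤ) :
    Finite {s : Multiset ℕ // Multiset.card s = k ∧ (s.sum : ℤ) = n} := by
  suffices {s : Multiset ℕ | Multiset.card s = k ∧ (s.sum : ℤ) = n} ⊆
      (fun x : Sym ℕ k => (x : Multiset ℕ)) '' ((Finset.range (n.toNat + 1)).sym k) from
    ((Finset.finite_toSet _).image _ |>.subset this).to_subtype
  rintro s ⟨hc, hs⟩
  refine ⟨⟨s, hc⟩, Finset.mem_sym_iff.2 fun a ha => ?_, rfl⟩
  have := Multiset.le_sum_of_mem (show a ∈ s from ha)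
  rw [Finset.mem_range]
  omega

theorem partitionCount_of_neg {n : ℤ} (hn : n < 0) (k : ℕ) : partitionCount k n = 0 :=
  Nat.card_eq_zero.2 (.inl ⟨fun s => by have := s.2.2; omega⟩)

theorem partitionCount_succ (k : ℕ) (n : ℤ) :
    partitionCount (k + 1) n = partitionCount k n + partitionCount (k + 1) (n - (k + 1)) := by
  rw [partitionCount, partitionCount, partitionCount, ← Nat.card_sum]
  refine (Nat.card_eq_of_bijective
    (Sum.elim (fun t => ⟨0 ::ₘ t.1, by simp [t.2.1], by simp [t.2.2]⟩)
      (fun t => ⟨t.1.map (· + 1), by simp [t.2.1], by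
        rw [Multiset.sum_map_add_one, t.2.1, Nat.cast_add, t.2.2]; push_cast; ring⟩))
    ⟨?_, ?_⟩).symm
  · rintro (t | t) (u | u) h <;> simp only [Sum.elim_inl, Sum.elim_inr, Subtype.mk.injEq] at h
    · rw [Multiset.cons_inj_right] at h; exact congrArg _ (Subtype.ext h)
    · have := congrArg (0 ∈ ·) h; simp at this
    · have := congrArg (0 ∈ ·) h; simp at this
    · exact congrArg _ (Subtype.ext (Multiset.map_injective (add_left_injective 1) h))
  · rintro ⟨s, hc, hs⟩
    by_cases h0 : 0 ∈ s
    · refine ⟨.inl ⟨s.erase 0, ?_, ?_⟩, Subtype.ext (Multiset.cons_erase h0)⟩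
      · simp [Multiset.card_erase_of_mem h0, hc]
      · rw [← hs, ← Multiset.cons_erase h0]; simp
    · obtain ⟨t, rfl⟩ := Multiset.exists_map_eq_of_forall_mem (f := (· + 1)) (s := s)
        fun x hx => ⟨x - 1, by have : x ≠ 0 := fun h => h0 (h ▸ hx); omega⟩
      refine ⟨.inr ⟨t, by simpa using hc, ?_⟩, rfl⟩
      rw [Multiset.sum_map_add_one] at hs
      rw [Multiset.card_map] at hc
      omega

theorem card_all_even_eq_partitionCount (k : ℕ) (n : ℤ) :
    Nat.card {s : Multiset ℕ // s.card = k ∧ (s.sum : ℤ) = 2 * n ∧ ∀ x ∈ s, Even x} =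
      partitionCount k n := by
  refine (Nat.card_eq_of_bijective (fun t => ⟨t.1.map (2 * ·), by simp [t.2.1], by
      rw [Multiset.sum_map_two_mul, Nat.cast_mul, t.2.2]; rfl, by simp⟩) ⟨?_, ?_⟩).symm
  · intro t u h
    exact Subtype.ext (Multiset.map_injective (mul_right_injective₀ two_ne_zero)
      (congrArg Subtype.val h))
  · rintro ⟨s, hc, hs, he⟩
    obtain ⟨t, rfl⟩ := Multiset.exists_map_eq_of_forall_mem (f := (2 * ·)) (s := s)
      fun x hx => (he x hx).two_dvd.imp fun _ h => h.symm
    refine ⟨⟨t, by simpa using hc, ?_⟩, rfl⟩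
    rw [Multiset.sum_map_two_mul] at hs
    omega

theorem filter_odd_cons_map_two_mul (a : ℕ) (t : Multiset ℕ) :
    ((2 * a + 1) ::ₘ t.map (2 * ·)).filter (fun x => Odd x) = {2 * a + 1} := by
  rw [Multiset.filter_cons_of_pos _ (odd_two_mul_add_one a),
    Multiset.filter_eq_nil.2 (by simp)]
  rfl

theorem card_one_odd_part_eq_sum_partitionCount (k p : ℕ) :
    Nat.card {s : Multiset ℕ // s.card = k + 1 ∧ s.sum = 2 * p + 1 ∧
        (s.filter (fun x => Odd x)).card = 1} =
      ∑ a ∈ Finset.range (p + 1), partitionCount k (p - a) := by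
  rw [← Fin.sum_univ_eq_sum_range (fun a => partitionCount k (p - a))]
  unfold partitionCount
  rw [← Nat.card_sigma]
  refine (Nat.card_eq_of_bijective (fun x => ⟨(2 * x.1 + 1) ::ₘ x.2.1.map (2 * ·),
    by simp [x.2.2.1],
    by
      simp only [Multiset.sum_cons, Multiset.sum_map_two_mul]
      have := x.2.2.2
      have := x.1.2
      omega,
    by rw [filter_odd_cons_map_two_mul]; rfl⟩) ⟨?_, ?_⟩).symm
  · rintro ⟨a, t, ht⟩ ⟨b, u, hu⟩ h
    have hs := congrArg Subtype.val h
    have hab : a = b := by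
      have := congrArg (fun s => (s.filter (fun x => Odd x)).sum) hs
      simp only [filter_odd_cons_map_two_mul, Multiset.sum_singleton] at this
      exact Fin.ext (by omega)
    subst hab
    simp only [Multiset.cons_inj_right] at hs
    obtain rfl := Multiset.map_injective (mul_right_injective₀ two_ne_zero) hs
    rfl
  · rintro ⟨s, hc, hs, h1⟩
    obtain ⟨o, ho⟩ := Multiset.card_eq_one.1 h1
    have hsplit : o ::ₘ s.filter (fun x => ¬ Odd x) = s := by
      rw [← Multiset.singleton_add, ← ho, Multiset.filter_add_not]
    obtain ⟨a, rfl⟩ : Odd o := (Multiset.mem_filter.1 (ho ▸ Multiset.mem_singleton_self o)).2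
    obtain ⟨t, ht⟩ := Multiset.exists_map_eq_of_forall_mem (f := (2 * ·))
      (s := s.filter (fun x => ¬ Odd x))
      fun x hx => (Nat.not_odd_iff_even.1 (Multiset.mem_filter.1 hx).2).two_dvd.imp
        fun _ h => h.symm
    rw [← ht] at hsplit
    subst hsplit
    simp only [Multiset.sum_cons, Multiset.sum_map_two_mul] at hs
    simp only [Multiset.card_cons, Multiset.card_map, add_left_inj] at hc
    exact ⟨⟨⟨a, by omega⟩, t, hc, by simp only; omega⟩, rfl⟩

/-- The number of partitions of `2p+1` into at most `k` parts (modeled as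
multisets of `k` nonnegative integers) with exactly one odd part equals the sum over
`0 ≤ i ≤ k-1` of the number of partitions of `2p - 2i` into at most `k` parts with all
parts even (the sum condition is stated in `ℤ`, so negative targets contribute nothing). -/
theorem stmt3 (p k : ℕ) :
    Nat.card {s : Multiset ℕ // s.card = k ∧ s.sum = 2 * p + 1 ∧
        (s.filter (fun x => Odd x)).card = 1} =
      ∑ i ∈ Finset.range k,
        Nat.card {s : Multiset ℕ // s.card = k ∧
          (s.sum : ℤ) = 2 * (p : ℤ) - 2 * (i : ℤ) ∧ ∀ x ∈ s, Even x} := by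
  simp only [← mul_sub, card_all_even_eq_partitionCount]
  cases k with
  | zero =>
    refine Nat.card_eq_zero.2 (.inl ⟨fun ⟨s, hc, hs, _⟩ => ?_⟩)
    simp [Multiset.card_eq_zero.1 hc] at hs
  | succ k =>
    rw [card_one_odd_part_eq_sum_partitionCount]
    exact sum_range_sub_eq_sum_range_sub (fun n => by
      rw [partitionCount_succ]; push_cast; rfl) (fun n hn => partitionCount_of_neg hn _) p
end

section
/- Let Σ_n act on the exterior algebra Λ_{F_2}(a_1, ..., a_n) over the field with two elements by permuting the generators. Then the elements 1, σ_1, σ_2, ..., σ_n form an F_2-vector space basis for the ring of invariants Λ(a_1,...,a_n)^{Σ_n}, where σ_i is the i-th elementary symmetric polynomial (orbit sum of a_1⋯a_i). -/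
/-!
A polynomial lies in the ideal `(a₁², …, aₙ²)` exactly when all its squarefree coefficients
vanish, so an element of `Λ` is determined by the coefficients `c_S` of the monomials
`∏_{i ∈ S} aᵢ`. Since `Σ_n` permutes these monomials and acts transitively on the subsets of
a given size, an invariant element has `c_S` depending only on `|S|`. The class of `σ_k` has
`c_S = 1` exactly when `|S| = k`, so the invariant element with `c_S = c_{|S|}` is
`∑ c_k σ_k`, and this expression is unique.
-/

open MvPolynomial

/-- The ideal of squares of generators; over `F₂` the quotient of the polynomial ring by this
ideal is the exterior algebra `Λ_{F₂}(a_1, …, a_n)`. -/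
noncomputable def sqIdeal (n : ℕ) : Ideal (MvPolynomial (Fin n) (ZMod 2)) :=
  Ideal.span (Set.range fun i : Fin n => (X i : MvPolynomial (Fin n) (ZMod 2)) ^ 2)

/-- The exterior algebra `Λ_{F₂}(a_1, …, a_n)`, modeled (char 2) as `F₂[a]/(aᵢ²)`. -/
noncomputable abbrev ExtF2 (n : ℕ) : Type :=
  MvPolynomial (Fin n) (ZMod 2) ⧸ sqIdeal n

/-- The action of a permutation `g ∈ Σ_n` on `Λ_{F₂}(a_1,…,a_n)` by permuting generators. -/
noncomputable def permAct (n : ℕ) (g : Equiv.Perm (Fin n)) : ExtF2 n →ₐ[ZMod 2] ExtF2 n :=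
  Ideal.Quotient.liftₐ (sqIdeal n)
    ((Ideal.Quotient.mkₐ (ZMod 2) (sqIdeal n)).comp (rename g : _ →ₐ[ZMod 2] _))
    (by
      intro a ha
      refine Submodule.span_induction ?_ ?_ ?_ ?_ ha
      · rintro _ ⟨i, rfl⟩
        rw [AlgHom.comp_apply, map_pow, rename_X, Ideal.Quotient.mkₐ_eq_mk,
          Ideal.Quotient.eq_zero_iff_mem]
        exact Ideal.subset_span ⟨g i, rfl⟩
      · exact map_zero _
      · intro x y _ _ hx hy; rw [map_add, hx, hy, add_zero]
      · intro c x _ hx; rw [smul_eq_mul, map_mul, hx, mul_zero])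

/-- The `F₂`-subspace of `Σ_n`-invariants of `Λ_{F₂}(a_1,…,a_n)`. -/
noncomputable def invSubmodule (n : ℕ) : Submodule (ZMod 2) (ExtF2 n) where
  carrier := {x | ∀ g : Equiv.Perm (Fin n), permAct n g x = x}
  add_mem' := fun hx hy => by intro g; rw [map_add, hx g, hy g]
  zero_mem' := fun g => map_zero _
  smul_mem' := fun c x hx => by intro g; rw [map_smul, hx g]


theorem Finset.exists_perm_map_eq {α : Type*} [DecidableEq α] {s t : Finset α}
    (h : s.card = t.card) : ∃ g : Equiv.Perm α, s.map g.toEmbedding = t := by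
  have := Set.powersetCard.isPretransitive (α := α) (n := t.card)
  obtain ⟨g, hg⟩ := MulAction.exists_smul_eq (Equiv.Perm α)
    (⟨s, h⟩ : Set.powersetCard α t.card) ⟨t, rfl⟩
  refine ⟨g, ?_⟩
  simpa [Finset.smul_finset_def, Finset.map_eq_image] using congrArg Subtype.val hg

theorem Fin.exists_finset_card_eq {n : ℕ} (k : Fin (n + 1)) :
    ∃ s : Finset (Fin n), s.card = k :=
  (Finset.exists_subset_card_eq (s := Finset.univ) (by simpa using k.is_le)).imp
    fun _ => And.right

namespace MvPolynomial

variable {σ τ R : Type*}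

noncomputable def squarefreeExponent (s : Finset σ) : σ →₀ ℕ := ∑ i ∈ s, Finsupp.single i 1

theorem squarefreeExponent_injective :
    Function.Injective (squarefreeExponent : Finset σ → σ →₀ ℕ) := fun s t h => by
  simpa [squarefreeExponent, Finsupp.toMultiset_sum_single] using
    congrArg Finsupp.toMultiset h

theorem squarefreeExponent_apply_le_one (s : Finset σ) (i : σ) : squarefreeExponent s i ≤ 1 := by
  classical
  simp only [squarefreeExponent, Finsupp.finsetSum_apply, Finsupp.single_apply]
  rw [Finset.sum_ite_eq']
  split_ifs <;> omega

theorem squarefreeExponent_support_of_le_one {d : σ →₀ ℕ} (hd : ∀ i, d i ≤ 1) :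
    squarefreeExponent d.support = d := by
  classical
  conv_rhs => rw [← Finsupp.sum_single d]
  refine Finset.sum_congr rfl fun i hi => ?_
  rw [Finsupp.mem_support_iff] at hi
  rw [show d i = 1 by have := hd i; omega]

theorem mapDomain_squarefreeExponent (f : σ ↪ τ) (s : Finset σ) :
    (squarefreeExponent s).mapDomain f = squarefreeExponent (s.map f) := by
  simp [squarefreeExponent, Finsupp.mapDomain_finsetSum]

section CommSemiring

variable [CommSemiring R]

theorem coeff_squarefreeExponent_esymm [Fintype σ] (s : Finset σ) (k : ℕ) :
    coeff (squarefreeExponent s) (esymm σ R k) = if s.card = k then 1 else 0 := by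
  classical
  rw [show esymm σ R k =
      ∑ t ∈ Finset.powersetCard k Finset.univ, monomial (squarefreeExponent t) 1 from
    esymm_eq_sum_monomial σ R k, coeff_sum]
  simp only [coeff_monomial, squarefreeExponent_injective.eq_iff]
  rw [Finset.sum_ite_eq']
  simp

theorem mem_span_X_sq_iff {p : MvPolynomial σ R} :
    p ∈ Ideal.span (Set.range fun i => (X i : MvPolynomial σ R) ^ 2) ↔
      ∀ s : Finset σ, coeff (squarefreeExponent s) p = 0 := by
  have hgen : (Set.range fun i => (X i : MvPolynomial σ R) ^ 2) =
      (fun d => monomial d 1) '' Set.range fun i => Finsupp.single i 2 := by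
    rw [← Set.range_comp]; simp [Function.comp_def, X_pow_eq_monomial]
  rw [hgen, mem_ideal_span_monomial_image]
  simp only [Set.mem_range, exists_exists_eq_and, Finsupp.single_le_iff, mem_support_iff]
  constructor
  · intro h s
    by_contra hs
    obtain ⟨i, hi⟩ := h _ hs
    have := squarefreeExponent_apply_le_one s i
    omega
  · intro h d hd
    by_contra! hsq
    exact hd (squarefreeExponent_support_of_le_one (by simpa using hsq) ▸ h d.support)

end CommSemiring

variable [CommRing R]

theorem mk_span_X_sq_eq_iff {p q : MvPolynomial σ R} :
    Ideal.Quotient.mk (Ideal.span (Set.range fun i => (X i : MvPolynomial σ R) ^ 2)) p =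
        Ideal.Quotient.mk _ q ↔
      ∀ s : Finset σ, coeff (squarefreeExponent s) p = coeff (squarefreeExponent s) q := by
  simp only [Ideal.Quotient.eq, mem_span_X_sq_iff, coeff_sub, sub_eq_zero]

theorem coeff_squarefreeExponent_map_of_mk_rename_eq {p : MvPolynomial σ R}
    {g : Equiv.Perm σ}
    (hp : Ideal.Quotient.mk (Ideal.span (Set.range fun i => (X i : MvPolynomial σ R) ^ 2))
        (rename g p) = Ideal.Quotient.mk _ p)
    (s : Finset σ) :
    coeff (squarefreeExponent (s.map g.toEmbedding)) p = coeff (squarefreeExponent s) p := by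
  rw [← mk_span_X_sq_eq_iff.1 hp, ← mapDomain_squarefreeExponent]
  exact coeff_rename_mapDomain g g.injective p _

end MvPolynomial

theorem permAct_mk {n : ℕ} (g : Equiv.Perm (Fin n)) (p : MvPolynomial (Fin n) (ZMod 2)) :
    permAct n g (Ideal.Quotient.mk (sqIdeal n) p) = Ideal.Quotient.mk (sqIdeal n) (rename g p) :=
  rfl

theorem mk_esymm_mem_invSubmodule (n k : ℕ) :
    Ideal.Quotient.mk (sqIdeal n) (esymm (Fin n) (ZMod 2) k) ∈ invSubmodule n := fun g => by
  rw [permAct_mk, esymm_isSymmetric]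

theorem coeff_squarefreeExponent_eq_of_card_eq {n : ℕ} {p : MvPolynomial (Fin n) (ZMod 2)}
    (hp : Ideal.Quotient.mk (sqIdeal n) p ∈ invSubmodule n) {s t : Finset (Fin n)}
    (hst : s.card = t.card) :
    coeff (squarefreeExponent s) p = coeff (squarefreeExponent t) p := by
  obtain ⟨g, rfl⟩ := Finset.exists_perm_map_eq hst
  exact (coeff_squarefreeExponent_map_of_mk_rename_eq (hp g) s).symm

theorem mk_eq_sum_smul_mk_esymm_iff {n : ℕ} {p : MvPolynomial (Fin n) (ZMod 2)}
    {c : Fin (n + 1) → ZMod 2} :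
    Ideal.Quotient.mk (sqIdeal n) p =
        ∑ k, c k • Ideal.Quotient.mk (sqIdeal n) (esymm (Fin n) (ZMod 2) k) ↔
      ∀ s : Finset (Fin n),
        coeff (squarefreeExponent s) p = c ⟨s.card, Nat.lt_succ_of_le (card_finset_fin_le s)⟩ := by
  have hsum : ∑ k, c k • Ideal.Quotient.mk (sqIdeal n) (esymm (Fin n) (ZMod 2) k) =
      Ideal.Quotient.mk (sqIdeal n) (∑ k, c k • esymm (Fin n) (ZMod 2) k) := by
    simp only [← Ideal.Quotient.mkₐ_eq_mk (ZMod 2), map_sum, map_smul]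
  rw [hsum, sqIdeal, mk_span_X_sq_eq_iff]
  refine forall_congr' fun s => ?_
  simp only [coeff_sum, coeff_smul, coeff_squarefreeExponent_esymm, smul_eq_mul, mul_ite,
    mul_one, mul_zero]
  rw [Fintype.sum_eq_single ⟨s.card, _⟩ fun k hk => if_neg fun h => hk (Fin.ext h.symm),
    if_pos rfl]

theorem linearIndependent_mk_esymm (n : ℕ) :
    LinearIndependent (ZMod 2)
      fun k : Fin (n + 1) => Ideal.Quotient.mk (sqIdeal n) (esymm (Fin n) (ZMod 2) k) := by
  rw [Fintype.linearIndependent_iff]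
  intro c hc k
  obtain ⟨s, hs⟩ := Fin.exists_finset_card_eq k
  have h := (mk_eq_sum_smul_mk_esymm_iff (p := 0)).1 (by simpa using hc.symm) s
  rwa [coeff_zero, eq_comm, show (⟨s.card, _⟩ : Fin (n + 1)) = k from Fin.ext hs] at h

theorem exists_eq_sum_smul_mk_esymm {n : ℕ} {x : ExtF2 n} (hx : x ∈ invSubmodule n) :
    ∃ c : Fin (n + 1) → ZMod 2,
      ∑ k, c k • Ideal.Quotient.mk (sqIdeal n) (esymm (Fin n) (ZMod 2) k) = x := by
  obtain ⟨p, rfl⟩ := Ideal.Quotient.mk_surjective x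
  choose T hT using @Fin.exists_finset_card_eq n
  refine ⟨fun k => coeff (squarefreeExponent (T k)) p, ?_⟩
  refine (mk_eq_sum_smul_mk_esymm_iff.2 fun s => ?_).symm
  exact coeff_squarefreeExponent_eq_of_card_eq hx (hT ⟨s.card, _⟩).symm

theorem stmt4 (n : ℕ) :
    ∃ b : Module.Basis (Fin (n + 1)) (ZMod 2) (invSubmodule n),
      ∀ i : Fin (n + 1),
        (b i : ExtF2 n) = Ideal.Quotient.mk (sqIdeal n) (esymm (Fin n) (ZMod 2) i) := by
  let e : Fin (n + 1) → invSubmodule n := fun k =>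
    ⟨Ideal.Quotient.mk (sqIdeal n) (esymm (Fin n) (ZMod 2) k), mk_esymm_mem_invSubmodule n k⟩
  have hli : LinearIndependent (ZMod 2) e :=
    .of_comp (invSubmodule n).subtype (linearIndependent_mk_esymm n)
  have hsp : ⊤ ≤ Submodule.span (ZMod 2) (Set.range e) := by
    rintro ⟨x, hx⟩ -
    obtain ⟨c, hc⟩ := exists_eq_sum_smul_mk_esymm hx
    exact (Submodule.mem_span_range_iff_exists_fun _).2 ⟨c, Subtype.ext (by simpa [e] using hc)⟩
  exact ⟨Module.Basis.mk hli hsp, fun k => by rw [Module.Basis.mk_apply]⟩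
end

section
/- Let n ≥ 1 and suppose 1 ≤ j ≤ n with j not a power of 2. Then the j-th elementary symmetric polynomial σ_j in Λ_{F_2}(a_1,...,a_n)^{Σ_n} is decomposable: there exists 0 < i < j such that σ_j = σ_i · σ_{j-i}. -/
/-!
In `F₂[a]/(aᵢ²)` a product of two squarefree monomials vanishes as soon as they share a
generator, and each squarefree monomial of degree `i + l` arises from exactly `C(i + l, i)`
disjoint pairs, so `σ_i σ_l = C(i + l, i) σ_{i+l}`. It therefore suffices to find `0 < i < j`
with `C(j, i)` odd: if `2 ^ k < j < 2 ^ (k + 1)`, then `i = 2 ^ k` works.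
-/

open MvPolynomial

namespace Nat

theorem odd_choose_add_two_pow {k r : ℕ} (hr : r < 2 ^ k) :
    Odd ((r + 2 ^ k).choose (2 ^ k)) := by
  have : Fact (Nat.Prime 2) := ⟨Nat.prime_two⟩
  -- By Kummer's theorem it suffices that adding `2 ^ k` to `r < 2 ^ k` produces no carry.
  have no_carry : padicValNat 2 ((r + 2 ^ k).choose (2 ^ k)) = 0 := by
    rw [padicValNat_choose' (lt_add_one _), Finset.card_eq_zero, Finset.filter_eq_empty_iff]
    intro i _
    rcases le_or_gt i k with hik | hki
    · rw [Nat.mod_eq_zero_of_dvd (pow_dvd_pow 2 hik), zero_add, not_le]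
      exact Nat.mod_lt _ (by positivity)
    · have hk : 2 ^ k < 2 ^ i := Nat.pow_lt_pow_right (by norm_num) hki
      rw [Nat.mod_eq_of_lt hk, Nat.mod_eq_of_lt (hr.trans hk), not_le]
      calc 2 ^ k + r < 2 ^ (k + 1) := by rw [pow_succ]; omega
        _ ≤ 2 ^ i := Nat.pow_le_pow_right (by norm_num) hki
  rw [padicValNat.eq_zero_iff] at no_carry
  rcases no_carry with h | h | h
  · omega
  · exact absurd h (Nat.choose_pos (Nat.le_add_left _ _)).ne'
  · exact Nat.odd_iff.mpr (Nat.two_dvd_ne_zero.mp h)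

theorem exists_odd_choose_of_ne_two_pow {j : ℕ} (hj : 1 ≤ j) (hpow : ¬∃ k, j = 2 ^ k) :
    ∃ i, 0 < i ∧ i < j ∧ Odd (j.choose i) := by
  set k := Nat.log 2 j
  have hle : 2 ^ k ≤ j := Nat.pow_log_le_self 2 (by omega)
  have hlt : j < 2 ^ (k + 1) := Nat.lt_pow_succ_log_self (by norm_num) j
  have hne : j ≠ 2 ^ k := fun h => hpow ⟨k, h⟩
  refine ⟨2 ^ k, by positivity, lt_of_le_of_ne hle hne.symm, ?_⟩
  have hodd := odd_choose_add_two_pow (r := j - 2 ^ k) (k := k) (by rw [pow_succ] at hlt; omega)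
  rwa [Nat.sub_add_cancel hle] at hodd

end Nat

namespace Finset

theorem sum_powersetCard_ite_disjoint_union {α M : Type*} [DecidableEq α] [AddCommMonoid M]
    (s : Finset α) (i l : ℕ) (f : Finset α → M) :
    ∑ S ∈ s.powersetCard i, ∑ T ∈ s.powersetCard l, (if Disjoint S T then f (S ∪ T) else 0) =
      (i + l).choose i • ∑ U ∈ s.powersetCard (i + l), f U := by
  have fiber : ∀ S ∈ s.powersetCard i,
      ∑ T ∈ s.powersetCard l, (if Disjoint S T then f (S ∪ T) else 0) =
        ∑ U ∈ (s.powersetCard (i + l)).filter (S ⊆ ·), f U := by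
    intro S hS
    rw [mem_powersetCard] at hS
    rw [← sum_filter]
    refine sum_nbij' (S ∪ ·) (· \ S) ?_ ?_ ?_ ?_ (fun _ _ => rfl)
    · intro T hT
      simp only [mem_filter, mem_powersetCard] at hT ⊢
      exact ⟨⟨union_subset hS.1 hT.1.1, by rw [card_union_of_disjoint hT.2, hS.2, hT.1.2]⟩,
        subset_union_left⟩
    · intro U hU
      simp only [mem_filter, mem_powersetCard] at hU ⊢
      exact ⟨⟨sdiff_subset.trans hU.1.1, by rw [card_sdiff_of_subset hU.2, hU.1.2, hS.2]; omega⟩,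
        disjoint_sdiff⟩
    · intro T hT
      simp only [mem_filter] at hT
      exact union_sdiff_cancel_left hT.2
    · intro U hU
      simp only [mem_filter] at hU
      exact union_sdiff_of_subset hU.2
  rw [sum_congr rfl fiber, sum_comm' (t' := s.powersetCard (i + l)) (s' := (·.powersetCard i))]
  · rw [smul_sum]
    refine sum_congr rfl fun U hU => ?_
    rw [sum_const, card_powersetCard, (mem_powersetCard.mp hU).2]
  · intro S U
    simp only [mem_filter, mem_powersetCard]
    constructor
    · rintro ⟨⟨-, hSi⟩, hU, hSU⟩
      exact ⟨⟨hSU, hSi⟩, hU⟩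
    · rintro ⟨⟨hSU, hSi⟩, hU⟩
      exact ⟨⟨hSU.trans hU.1, hSi⟩, hU, hSU⟩

end Finset

namespace MvPolynomial

variable (σ R : Type*) [CommRing R]

noncomputable def sqVarsIdeal : Ideal (MvPolynomial σ R) :=
  Ideal.span (Set.range fun s : σ => (X s : MvPolynomial σ R) ^ 2)

variable {σ R}

theorem mk_prod_X_mul_prod_X [DecidableEq σ] (S T : Finset σ) :
    Ideal.Quotient.mk (sqVarsIdeal σ R) ((∏ s ∈ S, X s) * ∏ s ∈ T, X s) =
      if Disjoint S T then Ideal.Quotient.mk (sqVarsIdeal σ R) (∏ s ∈ S ∪ T, X s) else 0 := by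
  split_ifs with h
  · rw [Finset.prod_union h]
  · obtain ⟨a, haS, haT⟩ := Finset.not_disjoint_iff.mp h
    rw [Ideal.Quotient.eq_zero_iff_mem, ← Finset.mul_prod_erase S _ haS,
      ← Finset.mul_prod_erase T _ haT,
      show ∀ x y z : MvPolynomial σ R, x * y * (x * z) = x ^ 2 * (y * z) by intros; ring]
    exact Ideal.mul_mem_right _ _ (Ideal.subset_span ⟨a, rfl⟩)

theorem mk_esymm_mul_esymm [Fintype σ] (i l : ℕ) :
    Ideal.Quotient.mk (sqVarsIdeal σ R) (esymm σ R i * esymm σ R l) =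
      (i + l).choose i • Ideal.Quotient.mk (sqVarsIdeal σ R) (esymm σ R (i + l)) := by
  classical
  rw [esymm, esymm, esymm, Finset.sum_mul_sum, map_sum, map_sum]
  simp_rw [map_sum, mk_prod_X_mul_prod_X]
  exact Finset.sum_powersetCard_ite_disjoint_union _ i l
    fun U => Ideal.Quotient.mk (sqVarsIdeal σ R) (∏ s ∈ U, X s)

end MvPolynomial

theorem sqIdeal_eq_sqVarsIdeal (n : ℕ) : sqIdeal n = MvPolynomial.sqVarsIdeal (Fin n) (ZMod 2) :=
  rfl

theorem stmt6_general (n j : ℕ) (hj1 : 1 ≤ j)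
    (hpow : ¬ ∃ i : ℕ, j = 2 ^ i) :
    ∃ i : ℕ, 0 < i ∧ i < j ∧
      Ideal.Quotient.mk (sqIdeal n) (esymm (Fin n) (ZMod 2) j) =
        Ideal.Quotient.mk (sqIdeal n) (esymm (Fin n) (ZMod 2) i) *
          Ideal.Quotient.mk (sqIdeal n) (esymm (Fin n) (ZMod 2) (j - i)) := by
  obtain ⟨i, hi0, hij, hodd⟩ := Nat.exists_odd_choose_of_ne_two_pow hj1 hpow
  refine ⟨i, hi0, hij, ?_⟩
  have hsplit := mk_esymm_mul_esymm (σ := Fin n) (R := ZMod 2) i (j - i)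
  rw [Nat.add_sub_cancel' hij.le, ← Nat.cast_smul_eq_nsmul (ZMod 2),
    (ZMod.natCast_eq_one_iff_odd).mpr hodd, one_smul] at hsplit
  rw [← map_mul, sqIdeal_eq_sqVarsIdeal, hsplit]

/-- if `1 ≤ j ≤ n` and `j` is not a power of `2`, then `σ_j` is decomposable in
`Λ_{F₂}(a_1,…,a_n)^{Σ_n}`: there is `0 < i < j` with `σ_j = σ_i · σ_{j-i}`. -/
theorem stmt6 (n j : ℕ) (hn : 1 ≤ n) (hj1 : 1 ≤ j) (hjn : j ≤ n)
    (hpow : ¬ ∃ i : ℕ, j = 2 ^ i) :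
    ∃ i : ℕ, 0 < i ∧ i < j ∧
      Ideal.Quotient.mk (sqIdeal n) (esymm (Fin n) (ZMod 2) j) =
        Ideal.Quotient.mk (sqIdeal n) (esymm (Fin n) (ZMod 2) i) *
          Ideal.Quotient.mk (sqIdeal n) (esymm (Fin n) (ZMod 2) (j - i)) :=
  stmt6_general n j hj1 hpow
end

section
/- In T_k = M[a_1,...,a_k,b_1,...,b_k]/(a_i^2 = ρ a_i + τ b_i), for any j ≤ k one has w_j^2 = Σ_{r=0}^{j} τ^{j-r} ρ^r · wc_{r, j-r}, where w_j is the j-th elementary symmetric polynomial in the a's and wc_{i,j} is the orbit sum of the monomial a_1⋯a_i b_{i+1}⋯b_{i+j} under the Σ_k action permuting indices (with wc_{0,j} = c_j and wc_{j,0} = w_j). -/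
open MvPolynomial

/-- The ideal of relations `aᵢ² = ρ aᵢ + τ bᵢ` defining
`T_k = M[a_1,…,a_k,b_1,…,b_k]/(aᵢ² - ρ aᵢ - τ bᵢ)`; the `a`-variables are indexed by
`Sum.inl` and the `b`-variables by `Sum.inr`. -/
noncomputable def relIdeal (k : ℕ) (M : Type*) [CommRing M] (ρ τ : M) :
    Ideal (MvPolynomial (Fin k ⊕ Fin k) M) :=
  Ideal.span (Set.range fun i : Fin k =>
    X (Sum.inl i) ^ 2 - (C ρ * X (Sum.inl i) + C τ * X (Sum.inr i)))

/-- `w_j`: the `j`-th elementary symmetric polynomial in the `a`-variables. -/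
noncomputable def wPoly (k : ℕ) (M : Type*) [CommRing M] (j : ℕ) :
    MvPolynomial (Fin k ⊕ Fin k) M :=
  ∑ s ∈ Finset.univ.powersetCard j, ∏ i ∈ s, X (Sum.inl i)

/-- `wc_{i,j}`: the orbit sum of the monomial `a_1⋯a_i b_{i+1}⋯b_{i+j}`, i.e. the sum over
pairs of disjoint subsets `S`, `T` with `|S| = i`, `|T| = j` of `(∏_{s∈S} a_s)(∏_{t∈T} b_t)`.
In particular `wc_{j,0} = w_j` and `wc_{0,j} = c_j`. -/
noncomputable def wcPoly (k : ℕ) (M : Type*) [CommRing M] (i j : ℕ) :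
    MvPolynomial (Fin k ⊕ Fin k) M :=
  ∑ s ∈ Finset.univ.powersetCard i,
    ∑ t ∈ (Finset.univ \ s).powersetCard j,
      (∏ a ∈ s, X (Sum.inl a)) * ∏ b ∈ t, X (Sum.inr b)

/-! Since `2 = 0`, squaring is additive, so `w_j² = Σ_{|S|=j} ∏_{i∈S} aᵢ²`, and the relations
turn this into `Σ_{|S|=j} ∏_{i∈S} (ρ aᵢ + τ bᵢ)`. Expanding each product and regrouping the
terms by the pair `(R, T)` of index sets contributing `a`'s and `b`'s yields the orbit sums
`wc_{|R|,|T|}`. -/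

open Finset

lemma two_eq_zero_of_zmodTwoAlgebra {A : Type*} [Semiring A] [Algebra (ZMod 2) A] :
    (2 : A) = 0 := by
  rw [← map_ofNat (algebraMap (ZMod 2) A) 2, show (2 : ZMod 2) = 0 from rfl, map_zero]

lemma sum_sq_of_zmodTwoAlgebra {ι A : Type*} [CommSemiring A] [Algebra (ZMod 2) A]
    (s : Finset ι) (f : ι → A) : (∑ i ∈ s, f i) ^ 2 = ∑ i ∈ s, f i ^ 2 := by
  cases subsingleton_or_nontrivial A
  · exact Subsingleton.elim _ _
  · have := CharTwo.of_one_ne_zero_of_two_eq_zero (R := A) one_ne_zero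
      two_eq_zero_of_zmodTwoAlgebra
    exact CharTwo.sum_sq s f

lemma sum_powersetCard_sum_powersetCard_sdiff {α N : Type*} [DecidableEq α] [AddCommMonoid N]
    (U : Finset α) {j r : ℕ} (hr : r ≤ j)
    (F : Finset α → Finset α → N) :
    ∑ S ∈ U.powersetCard j, ∑ R ∈ S.powersetCard r, F R (S \ R) =
      ∑ R ∈ U.powersetCard r, ∑ T ∈ (U \ R).powersetCard (j - r), F R T := by
  rw [sum_sigma', sum_sigma']
  refine sum_nbij' (fun p => ⟨p.2, p.1 \ p.2⟩) (fun p => ⟨p.1 ∪ p.2, p.1⟩) ?_ ?_ ?_ ?_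
    fun _ _ => rfl
  · rintro ⟨S, R⟩ hp
    simp only [mem_sigma, mem_powersetCard] at hp ⊢
    obtain ⟨⟨hSU, hSj⟩, hRS, hRr⟩ := hp
    exact ⟨⟨hRS.trans hSU, hRr⟩, sdiff_subset_sdiff hSU le_rfl, by
      rw [card_sdiff_of_subset hRS, hSj, hRr]⟩
  · rintro ⟨R, T⟩ hp
    simp only [mem_sigma, mem_powersetCard] at hp ⊢
    obtain ⟨⟨hRU, hRr⟩, hT, hTc⟩ := hp
    refine ⟨⟨union_subset hRU (hT.trans sdiff_subset), ?_⟩, subset_union_left, hRr⟩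
    rw [card_union_of_disjoint (disjoint_sdiff.mono_right hT), hRr, hTc]
    omega
  · rintro ⟨S, R⟩ hp
    simp only [mem_sigma, mem_powersetCard] at hp
    simp [union_sdiff_of_subset hp.2.1]
  · rintro ⟨R, T⟩ hp
    simp only [mem_sigma, mem_powersetCard] at hp
    simp [union_sdiff_cancel_left (disjoint_sdiff.mono_right hp.2.1)]

lemma sum_powersetCard_prod_add {α R : Type*} [DecidableEq α] [CommSemiring R]
    (U : Finset α) (f g : α → R) (j : ℕ) :
    ∑ S ∈ U.powersetCard j, ∏ i ∈ S, (f i + g i) =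
      ∑ r ∈ range (j + 1), ∑ R ∈ U.powersetCard r, ∑ T ∈ (U \ R).powersetCard (j - r),
        (∏ i ∈ R, f i) * ∏ i ∈ T, g i := by
  calc
    _ = ∑ S ∈ U.powersetCard j, ∑ r ∈ range (j + 1), ∑ R ∈ S.powersetCard r,
          (∏ i ∈ R, f i) * ∏ i ∈ S \ R, g i := by
        refine sum_congr rfl fun S hS => ?_
        rw [prod_add, sum_powerset, (mem_powersetCard.1 hS).2]
    _ = _ := by
        rw [sum_comm]
        exact sum_congr rfl fun r hr =>
          sum_powersetCard_sum_powersetCard_sdiff U (Nat.lt_succ_iff.1 (mem_range.1 hr))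
            fun R T => (∏ i ∈ R, f i) * ∏ i ∈ T, g i

lemma sum_powersetCard_prod_eq_sum_wcPoly (k : ℕ) (M : Type*) [CommRing M] (ρ τ : M)
    (j : ℕ) :
    ∑ S ∈ (univ : Finset (Fin k)).powersetCard j,
      ∏ i ∈ S, (C ρ * X (Sum.inl i) + C τ * X (Sum.inr i) : MvPolynomial (Fin k ⊕ Fin k) M) =
      ∑ r ∈ range (j + 1), C (τ ^ (j - r) * ρ ^ r) * wcPoly k M r (j - r) := by
  rw [sum_powersetCard_prod_add]
  refine sum_congr rfl fun r _ => ?_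
  simp only [wcPoly, mul_sum]
  refine sum_congr rfl fun R hR => sum_congr rfl fun T hT => ?_
  rw [prod_mul_distrib, prod_mul_distrib, prod_const, prod_const,
    (mem_powersetCard.1 hR).2, (mem_powersetCard.1 hT).2, ← C_pow, ← C_pow, C_mul]
  ring

lemma mk_X_inl_sq (k : ℕ) (M : Type*) [CommRing M] (ρ τ : M) (i : Fin k) :
    Ideal.Quotient.mk (relIdeal k M ρ τ) (X (Sum.inl i) ^ 2) =
      Ideal.Quotient.mk (relIdeal k M ρ τ) (C ρ * X (Sum.inl i) + C τ * X (Sum.inr i)) :=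
  Ideal.Quotient.eq.2 (Ideal.subset_span ⟨i, rfl⟩)

theorem stmt10_general (k : ℕ) (M : Type*) [CommRing M] [Algebra (ZMod 2) M] (ρ τ : M)
    (j : ℕ) :
    (Ideal.Quotient.mk (relIdeal k M ρ τ) (wPoly k M j)) ^ 2 =
      ∑ r ∈ Finset.range (j + 1),
        Ideal.Quotient.mk (relIdeal k M ρ τ)
          (C (τ ^ (j - r) * ρ ^ r) * wcPoly k M r (j - r)) := by
  set mk := Ideal.Quotient.mk (relIdeal k M ρ τ)
  calc
    (mk (wPoly k M j)) ^ 2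
        = ∑ S ∈ univ.powersetCard j, mk (∏ i ∈ S, X (Sum.inl i)) ^ 2 := by
      rw [wPoly, map_sum, sum_sq_of_zmodTwoAlgebra]
    _ = ∑ S ∈ univ.powersetCard j,
          mk (∏ i ∈ S, (C ρ * X (Sum.inl i) + C τ * X (Sum.inr i))) := by
      refine sum_congr rfl fun S _ => ?_
      rw [← map_pow, ← prod_pow, map_prod, map_prod]
      exact prod_congr rfl fun i _ => mk_X_inl_sq k M ρ τ i
    _ = _ := by
      rw [← map_sum, sum_powersetCard_prod_eq_sum_wcPoly, map_sum]

/-- in `T_k`, for `j ≤ k`,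
`w_j² = Σ_{r=0}^{j} τ^{j-r} ρ^r · wc_{r, j-r}`. -/
theorem stmt10 (k : ℕ) (M : Type*) [CommRing M] [Algebra (ZMod 2) M] (ρ τ : M)
    (j : ℕ) (hj : j ≤ k) :
    (Ideal.Quotient.mk (relIdeal k M ρ τ) (wPoly k M j)) ^ 2 =
      ∑ r ∈ Finset.range (j + 1),
        Ideal.Quotient.mk (relIdeal k M ρ τ)
          (C (τ ^ (j - r) * ρ ^ r) * wcPoly k M r (j - r)) :=
  stmt10_general k M ρ τ j
end

section
/- Let K_n = Λ_{F_2}(a_1,...,a_n) ⊗ F_2[b_1,...,b_n] with Σ_n acting by simultaneously permuting the a's and b's, and let L_n = K_n^{Σ_n}. If m = a_I b_I^{d_I} a_J b_K^{e_K} is a monomial with both a bound a-variable and a free a-variable (i.e., I ≠ ∅ and J ≠ ∅), then the orbit sum [m] lies in I² where I is the augmentation ideal of L_n; that is, [m] is decomposable. -/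
open MvPolynomial

/-- The ideal generated by the squares of the `a`-variables (indexed by `Sum.inl`); the
quotient is `K_n = Λ_{F₂}(a_1,…,a_n) ⊗ F₂[b_1,…,b_n]` (char 2), with the `b`-variables
indexed by `Sum.inr`. -/
noncomputable def sqIdealK (n : ℕ) : Ideal (MvPolynomial (Fin n ⊕ Fin n) (ZMod 2)) :=
  Ideal.span (Set.range fun i : Fin n =>
    (X (Sum.inl i) : MvPolynomial (Fin n ⊕ Fin n) (ZMod 2)) ^ 2)

/-- `K_n = Λ_{F₂}(a_1,…,a_n) ⊗ F₂[b_1,…,b_n]`. -/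
noncomputable abbrev Kn (n : ℕ) : Type :=
  MvPolynomial (Fin n ⊕ Fin n) (ZMod 2) ⧸ sqIdealK n

/-- The action of `g ∈ Σ_n` on `K_n`, permuting the `a`'s and `b`'s simultaneously. -/
noncomputable def permActK (n : ℕ) (g : Equiv.Perm (Fin n)) : Kn n →ₐ[ZMod 2] Kn n :=
  Ideal.Quotient.liftₐ (sqIdealK n)
    ((Ideal.Quotient.mkₐ (ZMod 2) (sqIdealK n)).comp
      (rename (Sum.map g g) : _ →ₐ[ZMod 2] _))
    (by
      intro a ha
      refine Submodule.span_induction ?_ ?_ ?_ ?_ ha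
      · rintro _ ⟨i, rfl⟩
        rw [AlgHom.comp_apply, map_pow, rename_X, Ideal.Quotient.mkₐ_eq_mk,
          Ideal.Quotient.eq_zero_iff_mem]
        exact Ideal.subset_span ⟨g i, rfl⟩
      · exact map_zero _
      · intro x y _ _ hx hy; rw [map_add, hx, hy, add_zero]
      · intro c x _ hx; rw [smul_eq_mul, map_mul, hx, mul_zero])

/-- `L_n = K_n^{Σ_n}`, the subalgebra of invariants. -/
noncomputable def Ln (n : ℕ) : Subalgebra (ZMod 2) (Kn n) where
  carrier := {x | ∀ g : Equiv.Perm (Fin n), permActK n g x = x}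
  add_mem' := fun hx hy => by intro g; rw [map_add, hx g, hy g]
  mul_mem' := fun hx hy => by intro g; rw [map_mul, hx g, hy g]
  algebraMap_mem' := fun r g => (permActK n g).commutes r

/-- The orbit sum `[m]` of a monomial (given by its exponent vector `μ`): the sum over the
`Σ_n`-orbit of `m`, each distinct monomial appearing exactly once. -/
noncomputable def orbitSum (n : ℕ) (μ : (Fin n ⊕ Fin n) →₀ ℕ) : Kn n :=
  Ideal.Quotient.mk (sqIdealK n)
    (∑ ν ∈ Finset.image
        (fun g : Equiv.Perm (Fin n) => Finsupp.equivMapDomain (Equiv.sumCongr g g) μ)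
        Finset.univ,
      monomial ν (1 : ZMod 2))

/-- The augmentation `K_n → F₂` sending all variables to zero. -/
noncomputable def augK (n : ℕ) : Kn n →ₐ[ZMod 2] ZMod 2 :=
  Ideal.Quotient.liftₐ (sqIdealK n) (aeval 0)
    (by
      intro a ha
      refine Submodule.span_induction ?_ ?_ ?_ ?_ ha
      · rintro _ ⟨i, rfl⟩
        simp
      · exact map_zero _
      · intro x y _ _ hx hy; rw [map_add, hx, hy, add_zero]
      · intro c x _ hx; rw [smul_eq_mul, map_mul, hx, mul_zero])

/-- The augmentation ideal `I ⊆ L_n`. -/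
noncomputable def augIdealL (n : ℕ) : Ideal (Ln n) :=
  RingHom.ker (((augK n).comp (Ln n).val : Ln n →ₐ[ZMod 2] ZMod 2) : Ln n →+* ZMod 2)

/-!
Split `m = m_A m_B` into its bound part `m_A = a_I b_I^{d_I}` and its free part
`m_B = a_J b_K^{e_K}`. Both orbit sums lie in the augmentation ideal, so `[m_A][m_B]` is
decomposable. A monomial `ρ m_A · τ m_B` of this product that survives in `K_n` (no `a_i²`)
again has a bound and a free `a`; if `τ K` misses `ρ I` it lies in the orbit of `m`, otherwise
it has fewer `b`-only indices than `m`. Each monomial of `[m]` arises from exactly one such pair,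
so `[m_A][m_B] - [m]` is, in `K_n`, an invariant sum of such monomials with fewer `b`-only
indices. Induction on the number of `b`-only indices, and at a fixed number on how many
monomials attain it, concludes.
-/

open Finset Equiv Sum

namespace Kn

variable {n : ℕ}

abbrev Exponent (n : ℕ) : Type := Fin n ⊕ Fin n →₀ ℕ

abbrev Poly (n : ℕ) : Type := MvPolynomial (Fin n ⊕ Fin n) (ZMod 2)

section Exponents

variable {σ τ : Perm (Fin n)} {μ ν : Exponent n} {S : Finset (Fin n)} {i : Fin n}

def act (σ : Perm (Fin n)) (μ : Exponent n) : Exponent n :=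
  Finsupp.equivMapDomain (sumCongr σ σ) μ

@[simp] lemma act_inl (σ : Perm (Fin n)) (μ : Exponent n) (i : Fin n) :
    act σ μ (inl i) = μ (inl (σ⁻¹ i)) := rfl

@[simp] lemma act_inr (σ : Perm (Fin n)) (μ : Exponent n) (i : Fin n) :
    act σ μ (inr i) = μ (inr (σ⁻¹ i)) := rfl

lemma act_eq_mapDomain (σ : Perm (Fin n)) (μ : Exponent n) :
    act σ μ = Finsupp.mapDomain (Sum.map σ σ) μ := by
  rw [act, Finsupp.equivMapDomain_eq_mapDomain]
  rfl

lemma act_add (σ : Perm (Fin n)) (μ ν : Exponent n) :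
    act σ (μ + ν) = act σ μ + act σ ν := by
  ext (_ | _) <;> simp

lemma act_mul (σ τ : Perm (Fin n)) (μ : Exponent n) : act (σ * τ) μ = act σ (act τ μ) := by
  ext (_ | _) <;> simp

@[simp] lemma act_one (μ : Exponent n) : act 1 μ = μ := by
  ext (_ | _) <;> simp

@[simp] lemma act_act_inv (σ : Perm (Fin n)) (μ : Exponent n) : act σ (act σ⁻¹ μ) = μ := by
  rw [← act_mul, mul_inv_cancel, act_one]

def aSupp (μ : Exponent n) : Finset (Fin n) := univ.filter fun i => μ (inl i) ≠ 0

def bSupp (μ : Exponent n) : Finset (Fin n) := univ.filter fun i => μ (inr i) ≠ 0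

@[simp] lemma mem_aSupp : i ∈ aSupp μ ↔ μ (inl i) ≠ 0 := by simp [aSupp]

@[simp] lemma mem_bSupp : i ∈ bSupp μ ↔ μ (inr i) ≠ 0 := by simp [bSupp]

lemma aSupp_add : aSupp (μ + ν) = aSupp μ ∪ aSupp ν := by
  ext; simp only [mem_aSupp, Finsupp.add_apply, ne_eq, Nat.add_eq_zero_iff, not_and_or, mem_union]

lemma bSupp_add : bSupp (μ + ν) = bSupp μ ∪ bSupp ν := by
  ext; simp only [mem_bSupp, Finsupp.add_apply, ne_eq, Nat.add_eq_zero_iff, not_and_or, mem_union]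

lemma aSupp_act : aSupp (act σ μ) = (aSupp μ).map σ.toEmbedding := by
  ext; simp [mem_map_equiv]

lemma bSupp_act : bSupp (act σ μ) = (bSupp μ).map σ.toEmbedding := by
  ext; simp [mem_map_equiv]

lemma act_congr (h : ∀ i ∈ aSupp μ ∪ bSupp μ, σ i = τ i) : act σ μ = act τ μ := by
  rw [act_eq_mapDomain, act_eq_mapDomain]
  refine Finsupp.mapDomain_congr ?_
  rintro (i | i) hi <;> simp [h i (by simp_all)]

def bound (μ : Exponent n) : Finset (Fin n) := aSupp μ ∩ bSupp μ

def free (μ : Exponent n) : Finset (Fin n) := aSupp μ \ bSupp μ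

def bOnly (μ : Exponent n) : Finset (Fin n) := bSupp μ \ aSupp μ

lemma bound_act : bound (act σ μ) = (bound μ).map σ.toEmbedding := by
  rw [bound, bound, aSupp_act, bSupp_act, map_inter]

lemma free_act : free (act σ μ) = (free μ).map σ.toEmbedding := by
  rw [free, free, aSupp_act, bSupp_act, Finset.map_sdiff]

lemma bOnly_act : bOnly (act σ μ) = (bOnly μ).map σ.toEmbedding := by
  rw [bOnly, bOnly, aSupp_act, bSupp_act, Finset.map_sdiff]

lemma disjoint_free_bOnly (μ : Exponent n) : Disjoint (free μ) (bOnly μ) :=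
  disjoint_sdiff_sdiff

def SqfreeA (μ : Exponent n) : Prop := ∀ i, μ (inl i) ≤ 1

instance : DecidablePred (SqfreeA (n := n)) :=
  fun μ => inferInstanceAs (Decidable (∀ i, μ (inl i) ≤ 1))

lemma sqfreeA_act (h : SqfreeA μ) (σ : Perm (Fin n)) : SqfreeA (act σ μ) :=
  fun i => h (σ⁻¹ i)

lemma SqfreeA.disjoint_aSupp (h : SqfreeA (μ + ν)) : Disjoint (aSupp μ) (aSupp ν) := by
  refine disjoint_left.2 fun i hμ hν => ?_
  have := h i
  simp only [mem_aSupp, Finsupp.add_apply] at *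
  omega

def IsMixed (μ : Exponent n) : Prop := SqfreeA μ ∧ (bound μ).Nonempty ∧ (free μ).Nonempty

lemma isMixed_act (h : IsMixed μ) (σ : Perm (Fin n)) : IsMixed (act σ μ) := by
  obtain ⟨hsq, hb, hf⟩ := h
  exact ⟨sqfreeA_act hsq σ, bound_act ▸ hb.map, free_act ▸ hf.map⟩

def restrict (S : Finset (Fin n)) (μ : Exponent n) : Exponent n :=
  μ.filter fun v => Sum.elim id id v ∈ S

@[simp] lemma restrict_inl : restrict S μ (inl i) = if i ∈ S then μ (inl i) else 0 := rfl

@[simp] lemma restrict_inr : restrict S μ (inr i) = if i ∈ S then μ (inr i) else 0 := rfl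

lemma restrict_add_restrict_compl (S : Finset (Fin n)) (μ : Exponent n) :
    restrict S μ + restrict Sᶜ μ = μ := by
  ext (i | i) <;> by_cases h : i ∈ S <;> simp [h]

lemma restrict_add (S : Finset (Fin n)) (μ ν : Exponent n) :
    restrict S (μ + ν) = restrict S μ + restrict S ν :=
  Finsupp.filter_add

lemma aSupp_restrict : aSupp (restrict S μ) = aSupp μ ∩ S := by
  ext; simp [and_comm]

lemma bSupp_restrict : bSupp (restrict S μ) = bSupp μ ∩ S := by
  ext; simp [and_comm]

lemma restrict_eq_self (h : aSupp μ ∪ bSupp μ ⊆ S) : restrict S μ = μ :=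
  (Finsupp.filter_eq_self_iff _ _).2 fun v hv => by
    cases v with
    | inl i => exact h (mem_union_left _ (mem_aSupp.2 hv))
    | inr i => exact h (mem_union_right _ (mem_bSupp.2 hv))

lemma restrict_eq_zero (h : Disjoint (aSupp μ ∪ bSupp μ) S) : restrict S μ = 0 :=
  (Finsupp.filter_eq_zero_iff _ _).2 fun v hv => by
    by_contra hne
    cases v with
    | inl i => exact disjoint_left.1 h (mem_union_left _ (mem_aSupp.2 hne)) hv
    | inr i => exact disjoint_left.1 h (mem_union_right _ (mem_bSupp.2 hne)) hv

def boundPart (ν : Exponent n) : Exponent n := restrict (bound ν) ν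

def freePart (ν : Exponent n) : Exponent n := restrict (bound ν)ᶜ ν

lemma boundPart_add_freePart (ν : Exponent n) : boundPart ν + freePart ν = ν :=
  restrict_add_restrict_compl _ _

lemma aSupp_boundPart : aSupp (boundPart ν) = bound ν := by
  rw [boundPart, aSupp_restrict, bound, ← inter_assoc, inter_self]

lemma bSupp_boundPart : bSupp (boundPart ν) = bound ν := by
  rw [boundPart, bSupp_restrict, bound, inter_comm (aSupp ν), ← inter_assoc, inter_self]

lemma aSupp_freePart : aSupp (freePart ν) = free ν := by
  ext; simp [freePart, aSupp_restrict, bound, free]; tauto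

lemma bSupp_freePart : bSupp (freePart ν) = bOnly ν := by
  ext; simp [freePart, bSupp_restrict, bound, bOnly]; tauto

lemma boundPart_ne_zero (h : (bound ν).Nonempty) : boundPart ν ≠ 0 := by
  rintro h0
  simp [← aSupp_boundPart, h0, aSupp] at h

lemma freePart_ne_zero (h : (free ν).Nonempty) : freePart ν ≠ 0 := by
  rintro h0
  simp [← aSupp_freePart, h0, aSupp] at h

def orbit (μ : Exponent n) : Finset (Exponent n) := univ.image fun σ => act σ μ

lemma mem_orbit {κ : Exponent n} : κ ∈ orbit μ ↔ ∃ σ, act σ μ = κ := by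
  simp [orbit]

lemma act_mem_orbit_iff {κ : Exponent n} : act σ κ ∈ orbit μ ↔ κ ∈ orbit μ := by
  simp only [mem_orbit]
  constructor
  · rintro ⟨τ, h⟩
    exact ⟨σ⁻¹ * τ, by rw [act_mul, h, ← act_mul, inv_mul_cancel, act_one]⟩
  · rintro ⟨τ, rfl⟩
    exact ⟨σ * τ, act_mul σ τ μ⟩

lemma zero_notMem_orbit (h : μ ≠ 0) : 0 ∉ orbit μ := by
  rintro h0
  obtain ⟨σ, hσ⟩ := mem_orbit.1 h0
  exact h (by rw [← act_act_inv σ⁻¹ μ, inv_inv, hσ]; ext (_ | _) <;> simp)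

end Exponents

section Pair

variable (ν : Exponent n) (ρ τ : Perm (Fin n))

lemma aSupp_pair : aSupp (act ρ (boundPart ν) + act τ (freePart ν)) =
    (bound ν).map ρ.toEmbedding ∪ (free ν).map τ.toEmbedding := by
  rw [aSupp_add, aSupp_act, aSupp_act, aSupp_boundPart, aSupp_freePart]

lemma bSupp_pair : bSupp (act ρ (boundPart ν) + act τ (freePart ν)) =
    (bound ν).map ρ.toEmbedding ∪ (bOnly ν).map τ.toEmbedding := by
  rw [bSupp_add, bSupp_act, bSupp_act, bSupp_boundPart, bSupp_freePart]

lemma bound_pair : bound (act ρ (boundPart ν) + act τ (freePart ν)) =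
    (bound ν).map ρ.toEmbedding := by
  rw [bound, aSupp_pair, bSupp_pair, ← union_inter_distrib_left, ← map_inter,
    disjoint_iff_inter_eq_empty.1 (disjoint_free_bOnly ν), map_empty, union_empty]

lemma bOnly_pair_subset : bOnly (act ρ (boundPart ν) + act τ (freePart ν)) ⊆
    (bOnly ν).map τ.toEmbedding := by
  rw [bOnly, aSupp_pair, bSupp_pair]
  intro i
  simp only [mem_sdiff, mem_union]
  tauto

lemma free_pair (h : Disjoint ((bound ν).map ρ.toEmbedding) ((free ν).map τ.toEmbedding)) :
    free (act ρ (boundPart ν) + act τ (freePart ν)) = (free ν).map τ.toEmbedding := by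
  have hJK : Disjoint ((free ν).map τ.toEmbedding) ((bOnly ν).map τ.toEmbedding) :=
    (disjoint_map _).2 (disjoint_free_bOnly ν)
  rw [free, aSupp_pair, bSupp_pair]
  ext i
  have h1 : i ∈ (free ν).map τ.toEmbedding → i ∉ (bound ν).map ρ.toEmbedding :=
    fun hi => disjoint_right.1 h hi
  have h2 : i ∈ (free ν).map τ.toEmbedding → i ∉ (bOnly ν).map τ.toEmbedding :=
    fun hi => disjoint_left.1 hJK hi
  simp only [mem_sdiff, mem_union]
  tauto

lemma exists_act_eq_pair
    (hJ : Disjoint ((bound ν).map ρ.toEmbedding) ((free ν).map τ.toEmbedding))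
    (hK : Disjoint ((bound ν).map ρ.toEmbedding) ((bOnly ν).map τ.toEmbedding)) :
    ∃ σ : Perm (Fin n), act σ ν = act ρ (boundPart ν) + act τ (freePart ν) := by
  have hBC : Disjoint (bound ν) (free ν ∪ bOnly ν) := by
    simp only [disjoint_left, bound, free, bOnly, mem_inter, mem_union, mem_sdiff]
    tauto
  have hρτ :
      Disjoint ((bound ν).map ρ.toEmbedding) ((free ν ∪ bOnly ν).map τ.toEmbedding) := by
    rw [map_union]
    exact disjoint_union_right.2 ⟨hJ, hK⟩
  have hf : Function.Injective
      (Sum.elim (fun i : bound ν => (i : Fin n))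
        (fun i : ↥(free ν ∪ bOnly ν) => (i : Fin n))) :=
    Subtype.val_injective.sumElim Subtype.val_injective
      fun i j h => disjoint_left.1 hBC i.2 (h ▸ j.2)
  have hg : Function.Injective
      (Sum.elim (fun i : bound ν => ρ i) (fun i : ↥(free ν ∪ bOnly ν) => τ i)) :=
    (ρ.injective.comp Subtype.val_injective).sumElim (τ.injective.comp Subtype.val_injective)
      fun i j h => disjoint_left.1 hρτ (mem_map_of_mem ρ.toEmbedding i.2)
        (show ρ i ∈ _ from (show ρ i = τ j from h) ▸ mem_map_of_mem τ.toEmbedding j.2)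
  obtain ⟨σ, hσ⟩ := Perm.exists_extending_pair _ _ hf hg
  refine ⟨σ, ?_⟩
  conv_lhs => rw [← boundPart_add_freePart ν, act_add]
  congr 1
  · refine act_congr fun i hi => hσ (inl ⟨i, ?_⟩)
    rwa [aSupp_boundPart, bSupp_boundPart, union_self] at hi
  · refine act_congr fun i hi => hσ (inr ⟨i, ?_⟩)
    rwa [aSupp_freePart, bSupp_freePart] at hi

lemma SqfreeA.disjoint_pair (h : SqfreeA (act ρ (boundPart ν) + act τ (freePart ν))) :
    Disjoint ((bound ν).map ρ.toEmbedding) ((free ν).map τ.toEmbedding) := by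
  simpa only [aSupp_act, aSupp_boundPart, aSupp_freePart] using h.disjoint_aSupp

lemma disjoint_bound_map_of_bOnly_pair_eq
    (h : bOnly (act ρ (boundPart ν) + act τ (freePart ν)) = (bOnly ν).map τ.toEmbedding) :
    Disjoint ((bound ν).map ρ.toEmbedding) ((bOnly ν).map τ.toEmbedding) := by
  rw [← h, bOnly, aSupp_pair]
  exact disjoint_left.2 fun i hi hi' => (mem_sdiff.1 hi').2 (mem_union_left _ hi)

lemma IsMixed.pair (hν : IsMixed ν) (h : SqfreeA (act ρ (boundPart ν) + act τ (freePart ν))) :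
    IsMixed (act ρ (boundPart ν) + act τ (freePart ν)) :=
  ⟨h, bound_pair ν ρ τ ▸ hν.2.1.map, free_pair ν ρ τ h.disjoint_pair ▸ hν.2.2.map⟩

lemma card_bOnly_pair_lt_or_mem_orbit
    (h : SqfreeA (act ρ (boundPart ν) + act τ (freePart ν))) :
    (bOnly (act ρ (boundPart ν) + act τ (freePart ν))).card < (bOnly ν).card ∨
      act ρ (boundPart ν) + act τ (freePart ν) ∈ orbit ν := by
  rcases (bOnly_pair_subset ν ρ τ).eq_or_ssubset with heq | hlt
  · exact Or.inr (mem_orbit.2 (exists_act_eq_pair ν ρ τ h.disjoint_pair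
      (disjoint_bound_map_of_bOnly_pair_eq ν ρ τ heq)))
  · exact Or.inl (card_map τ.toEmbedding (s := bOnly ν) ▸ card_lt_card hlt)

lemma pair_eq_self (hν : SqfreeA ν) (h : act ρ (boundPart ν) + act τ (freePart ν) = ν) :
    act ρ (boundPart ν) = boundPart ν ∧ act τ (freePart ν) = freePart ν := by
  -- The `b`-only indices of the sum `ν` are exactly `τ K`, which therefore misses `ρ I = I`;
  -- restricting to `I` then isolates the first summand.
  have hB : (bound ν).map ρ.toEmbedding = bound ν := by rw [← bound_pair ν ρ τ, h]
  have hK : bOnly (act ρ (boundPart ν) + act τ (freePart ν)) = (bOnly ν).map τ.toEmbedding :=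
    eq_of_subset_of_card_le (bOnly_pair_subset ν ρ τ) (by rw [card_map, h])
  have hsq : SqfreeA (act ρ (boundPart ν) + act τ (freePart ν)) := by rw [h]; exact hν
  have hJ := hsq.disjoint_pair
  have hA : act ρ (boundPart ν) = boundPart ν := by
    calc act ρ (boundPart ν)
        = restrict (bound ν) (act ρ (boundPart ν) + act τ (freePart ν)) := by
          rw [restrict_add, restrict_eq_self, restrict_eq_zero, add_zero]
          · rw [aSupp_act, bSupp_act, aSupp_freePart, bSupp_freePart, ← hB]
            exact (disjoint_union_right.2
              ⟨hJ, disjoint_bound_map_of_bOnly_pair_eq ν ρ τ hK⟩).symm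
          · rw [aSupp_act, bSupp_act, aSupp_boundPart, bSupp_boundPart, union_self, hB]
      _ = boundPart ν := by rw [h, boundPart]
  refine ⟨hA, add_left_cancel (a := boundPart ν) ?_⟩
  rw [← hA, h, hA, boundPart_add_freePart]

end Pair

section Polynomials

variable {p q : Poly n} {μ ν κ : Exponent n}

def IsInvariant (p : Poly n) : Prop := ∀ g : Perm (Fin n), rename (Sum.map g g) p = p

lemma coeff_act_rename (g : Perm (Fin n)) (p : Poly n) (κ : Exponent n) :
    coeff (act g κ) (rename (Sum.map g g) p) = coeff κ p := by
  rw [act_eq_mapDomain, coeff_rename_mapDomain _ (g.injective.sumMap g.injective)]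

lemma IsInvariant.coeff_act (hp : IsInvariant p) (g : Perm (Fin n)) (κ : Exponent n) :
    coeff (act g κ) p = coeff κ p := by
  rw [← coeff_act_rename g p κ, hp g]

lemma isInvariant_of_coeff (h : ∀ g κ, coeff (act g κ) p = coeff κ p) : IsInvariant p :=
  fun g => MvPolynomial.ext _ _ fun κ => by rw [← act_act_inv g κ, coeff_act_rename, h g]

lemma IsInvariant.mul (hp : IsInvariant p) (hq : IsInvariant q) : IsInvariant (p * q) :=
  fun g => by rw [map_mul, hp g, hq g]

lemma IsInvariant.sub (hp : IsInvariant p) (hq : IsInvariant q) : IsInvariant (p - q) :=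
  fun g => by rw [map_sub, hp g, hq g]

noncomputable def orbitPoly (μ : Exponent n) : Poly n := ∑ κ ∈ orbit μ, monomial κ 1

lemma coeff_orbitPoly : coeff κ (orbitPoly μ) = if κ ∈ orbit μ then 1 else 0 := by
  simp only [orbitPoly, coeff_sum, coeff_monomial, sum_ite_eq']

lemma isInvariant_orbitPoly : IsInvariant (orbitPoly μ) :=
  isInvariant_of_coeff fun g κ => by simp only [coeff_orbitPoly, act_mem_orbit_iff]

lemma coeff_orbitPoly_mul (μ μ' κ : Exponent n) :
    coeff κ (orbitPoly μ * orbitPoly μ') =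
      ((orbit μ ×ˢ orbit μ').filter fun ab => ab.1 + ab.2 = κ).card := by
  simp only [orbitPoly, sum_mul_sum, monomial_mul, mul_one, ← sum_product', coeff_sum,
    coeff_monomial, sum_boole]

noncomputable def orbitProd (ν : Exponent n) : Poly n :=
  orbitPoly (boundPart ν) * orbitPoly (freePart ν)

lemma isInvariant_orbitProd : IsInvariant (orbitProd ν) :=
  isInvariant_orbitPoly.mul isInvariant_orbitPoly

lemma coeff_orbitProd_self (hν : SqfreeA ν) : coeff ν (orbitProd ν) = 1 := by
  have hpairs :
      ((orbit (boundPart ν) ×ˢ orbit (freePart ν)).filter fun ab => ab.1 + ab.2 = ν) =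
        {(boundPart ν, freePart ν)} := by
    refine eq_singleton_iff_unique_mem.2 ⟨?_, ?_⟩
    · simp only [mem_filter, mem_product, mem_orbit, boundPart_add_freePart, and_true]
      exact ⟨⟨1, act_one _⟩, ⟨1, act_one _⟩⟩
    · simp only [mem_filter, mem_product, mem_orbit, Prod.forall]
      rintro _ _ ⟨⟨⟨ρ, rfl⟩, ⟨τ, rfl⟩⟩, hsum⟩
      obtain ⟨hρ, hτ⟩ := pair_eq_self ν ρ τ hν hsum
      rw [hρ, hτ]
  rw [orbitProd, coeff_orbitPoly_mul, hpairs, card_singleton, Nat.cast_one]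

lemma coeff_orbitProd_act (hν : SqfreeA ν) (σ : Perm (Fin n)) :
    coeff (act σ ν) (orbitProd ν) = 1 := by
  rw [isInvariant_orbitProd.coeff_act, coeff_orbitProd_self hν]

lemma IsMixed.of_coeff_orbitProd_ne_zero (hν : IsMixed ν) (hκ : SqfreeA κ)
    (h : coeff κ (orbitProd ν) ≠ 0) :
    IsMixed κ ∧ ((bOnly κ).card < (bOnly ν).card ∨ κ ∈ orbit ν) := by
  rw [orbitProd, coeff_orbitPoly_mul] at h
  obtain ⟨⟨_, _⟩, hab⟩ := card_ne_zero.1 fun h0 => h (by rw [h0, Nat.cast_zero])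
  simp only [mem_filter, mem_product, mem_orbit] at hab
  obtain ⟨⟨⟨ρ, rfl⟩, ⟨τ, rfl⟩⟩, rfl⟩ := hab
  exact ⟨hν.pair ν ρ τ hκ, card_bOnly_pair_lt_or_mem_orbit ν ρ τ hκ⟩

lemma mem_sqIdealK_of_forall_not_sqfreeA (h : ∀ κ ∈ p.support, ¬SqfreeA κ) :
    p ∈ sqIdealK n := by
  rw [p.as_sum]
  refine Ideal.sum_mem _ fun κ hκ => ?_
  obtain ⟨i, hi⟩ := not_forall.1 (h κ hκ)
  have hle : Finsupp.single (inl i) 2 ≤ κ := Finsupp.single_le_iff.2 (not_le.1 hi)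
  have hfactor : monomial κ (coeff κ p) =
      X (inl i) ^ 2 * monomial (κ - Finsupp.single (inl i) 2) (coeff κ p) := by
    rw [X_pow_eq_monomial, monomial_mul, one_mul, add_tsub_cancel_of_le hle]
  rw [hfactor]
  exact Ideal.mul_mem_right _ _ (Ideal.subset_span ⟨i, rfl⟩)

lemma mk_mem_Ln (hp : IsInvariant p) : Ideal.Quotient.mk (sqIdealK n) p ∈ Ln n :=
  fun g => congrArg (Ideal.Quotient.mk (sqIdealK n)) (hp g)

noncomputable def orbitSumL (μ : Exponent n) : Ln n :=
  ⟨orbitSum n μ, mk_mem_Ln isInvariant_orbitPoly⟩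

lemma orbitSumL_mem_augIdealL (h : μ ≠ 0) : orbitSumL μ ∈ augIdealL n := by
  change aeval 0 (orbitPoly μ) = 0
  rw [aeval_zero, constantCoeff_eq, coeff_orbitPoly, if_neg (zero_notMem_orbit h), map_zero]

def Decomposable (x : Kn n) : Prop := ∃ y ∈ augIdealL n ^ 2, (y : Kn n) = x

lemma decomposable_zero : Decomposable (0 : Kn n) := ⟨0, zero_mem _, rfl⟩

lemma Decomposable.add {x y : Kn n} (hx : Decomposable x) (hy : Decomposable y) :
    Decomposable (x + y) := by
  obtain ⟨x', hx', rfl⟩ := hx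
  obtain ⟨y', hy', rfl⟩ := hy
  exact ⟨x' + y', add_mem hx' hy', rfl⟩

lemma IsMixed.decomposable_orbitProd (hν : IsMixed ν) :
    Decomposable (Ideal.Quotient.mk (sqIdealK n) (orbitProd ν)) :=
  ⟨orbitSumL (boundPart ν) * orbitSumL (freePart ν),
    pow_two (augIdealL n) ▸ Ideal.mul_mem_mul
      (orbitSumL_mem_augIdealL (boundPart_ne_zero hν.2.1))
      (orbitSumL_mem_augIdealL (freePart_ne_zero hν.2.2)),
    (map_mul _ _ _).symm⟩

end Polynomials

section Reduction

variable {k : ℕ} {p : Poly n} {ν : Exponent n}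

def MixedBelow (k : ℕ) (p : Poly n) : Prop :=
  ∀ κ ∈ p.support, SqfreeA κ → IsMixed κ ∧ (bOnly κ).card < k

def level (k : ℕ) (p : Poly n) : Finset (Exponent n) :=
  p.support.filter fun κ => SqfreeA κ ∧ (bOnly κ).card = k

lemma mem_level {κ : Exponent n} :
    κ ∈ level k p ↔ coeff κ p ≠ 0 ∧ SqfreeA κ ∧ (bOnly κ).card = k := by
  simp [level]

lemma MixedBelow.isMixed_of_mem_level {k' : ℕ} (hmix : MixedBelow k' p) (hν : ν ∈ level k p) :
    IsMixed ν :=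
  (hmix ν (mem_support_iff.2 (mem_level.1 hν).1) (mem_level.1 hν).2.1).1

lemma coeff_sub_orbitProd_act (hp : IsInvariant p) (hν : ν ∈ level k p) (σ : Perm (Fin n)) :
    coeff (act σ ν) (p - orbitProd ν) = 0 := by
  obtain ⟨hνp, hsq, -⟩ := mem_level.1 hν
  have hνp' : coeff ν p = 1 := Fin.eq_one_of_ne_zero _ hνp
  rw [coeff_sub, hp.coeff_act, coeff_orbitProd_act hsq, hνp', sub_self]

lemma MixedBelow.sub_orbitProd (hp : MixedBelow (k + 1) p) (hν : ν ∈ level k p) :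
    MixedBelow (k + 1) (p - orbitProd ν) := by
  intro κ hκ hsq
  by_cases hκp : coeff κ p = 0
  · have hprod : coeff κ (orbitProd ν) ≠ 0 := by
      simpa [coeff_sub, hκp] using mem_support_iff.1 hκ
    have hνk := (mem_level.1 hν).2.2
    obtain ⟨hmix, hlt | horb⟩ :=
      (hp.isMixed_of_mem_level hν).of_coeff_orbitProd_ne_zero hsq hprod
    · exact ⟨hmix, by omega⟩
    · obtain ⟨σ, rfl⟩ := mem_orbit.1 horb
      exact ⟨hmix, by rw [bOnly_act, card_map]; omega⟩
  · exact hp κ (mem_support_iff.2 hκp) hsq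

lemma level_sub_orbitProd_ssubset (hp : IsInvariant p) (hmix : MixedBelow (k + 1) p)
    (hν : ν ∈ level k p) : level k (p - orbitProd ν) ⊂ level k p := by
  refine (ssubset_iff_of_subset fun κ hκ => ?_).2
    ⟨ν, hν, fun h => (mem_level.1 h).1 (by simpa using coeff_sub_orbitProd_act hp hν 1)⟩
  obtain ⟨hκq, hsq, hκk⟩ := mem_level.1 hκ
  by_cases hprod : coeff κ (orbitProd ν) = 0
  · exact mem_level.2 ⟨by simpa [coeff_sub, hprod] using hκq, hsq, hκk⟩
  · obtain ⟨-, hlt | horb⟩ :=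
      (hmix.isMixed_of_mem_level hν).of_coeff_orbitProd_ne_zero hsq hprod
    · have := (mem_level.1 hν).2.2
      omega
    · obtain ⟨σ, rfl⟩ := mem_orbit.1 horb
      exact absurd (coeff_sub_orbitProd_act hp hν σ) hκq

theorem decomposable_mk (hp : IsInvariant p) (hmix : MixedBelow k p) :
    Decomposable (Ideal.Quotient.mk (sqIdealK n) p) := by
  induction k generalizing p with
  | zero =>
    rw [Ideal.Quotient.eq_zero_iff_mem.2 (mem_sqIdealK_of_forall_not_sqfreeA
      fun κ hκ hsq => Nat.not_lt_zero _ (hmix κ hκ hsq).2)]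
    exact decomposable_zero
  | succ k ih =>
    induction hc : (level k p).card using Nat.strong_induction_on generalizing p with
    | _ c ihc =>
      obtain hempty | ⟨ν, hν⟩ := (level k p).eq_empty_or_nonempty
      · refine ih hp fun κ hκ hsq => ⟨(hmix κ hκ hsq).1,
          lt_of_le_of_ne (Nat.lt_succ_iff.1 (hmix κ hκ hsq).2) fun hk => ?_⟩
        exact notMem_empty κ (hempty ▸ mem_level.2 ⟨mem_support_iff.1 hκ, hsq, hk⟩)
      · rw [← add_sub_cancel (orbitProd ν) p, map_add]
        refine (hmix.isMixed_of_mem_level hν).decomposable_orbitProd.add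
          (ihc _ ?_ (hp.sub isInvariant_orbitProd) (hmix.sub_orbitProd hν) rfl)
        exact hc ▸ card_lt_card (level_sub_orbitProd_ssubset hp hmix hν)

theorem IsMixed.decomposable_orbitSum (hν : IsMixed ν) : Decomposable (orbitSum n ν) :=
  decomposable_mk (p := orbitPoly ν) (k := (bOnly ν).card + 1) isInvariant_orbitPoly
    fun κ hκ _ => by
      rw [mem_support_iff, coeff_orbitPoly, ne_eq, ite_eq_right_iff, not_forall] at hκ
      obtain ⟨σ, rfl⟩ := mem_orbit.1 hκ.1
      exact ⟨isMixed_act hν σ, by rw [bOnly_act, card_map]; omega⟩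

end Reduction

end Kn

theorem stmt13_general (n : ℕ) (I J K : Finset (Fin n)) (d e : Fin n → ℕ)
    (hIJ : Disjoint I J) (hJK : Disjoint J K)
    (hI : I.Nonempty) (hJ : J.Nonempty)
    (hd : ∀ i ∈ I, 1 ≤ d i) :
    ∃ y : Ln n, y ∈ (augIdealL n) ^ 2 ∧
      (y : Kn n) = orbitSum n
        (Finsupp.equivFunOnFinite.symm (Sum.elim
          (fun i => if i ∈ I ∪ J then 1 else 0)
          (fun i => if i ∈ I then d i else if i ∈ K then e i else 0))) := by
  refine Kn.IsMixed.decomposable_orbitSum ⟨fun i => ?_, ?_, ?_⟩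
  · change ite _ 1 0 ≤ 1
    split_ifs <;> omega
  · obtain ⟨i, hi⟩ := hI
    exact ⟨i, by simp [Kn.bound, hi, Nat.one_le_iff_ne_zero.1 (hd i hi)]⟩
  · obtain ⟨j, hj⟩ := hJ
    exact ⟨j, by simp [Kn.free, hj, disjoint_right.1 hIJ hj, disjoint_left.1 hJK hj]⟩

/-- let `m = a_I b_I^{d_I} a_J b_K^{e_K}` be a monomial (with `I`, `J`, `K`
pairwise disjoint, the bound `b`-exponents `d` positive on `I`, the free `b`-exponents `e`
positive on `K`). If `I ≠ ∅` and `J ≠ ∅` (some `a` is bound and some `a` is free), then the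
orbit sum `[m]` is decomposable: it is (the image in `K_n` of) an element of `I²`, where `I`
is the augmentation ideal of `L_n`. -/
theorem stmt13 (n : ℕ) (I J K : Finset (Fin n)) (d e : Fin n → ℕ)
    (hIJ : Disjoint I J) (hIK : Disjoint I K) (hJK : Disjoint J K)
    (hI : I.Nonempty) (hJ : J.Nonempty)
    (hd : ∀ i ∈ I, 1 ≤ d i) (he : ∀ i ∈ K, 1 ≤ e i) :
    ∃ y : Ln n, y ∈ (augIdealL n) ^ 2 ∧
      (y : Kn n) = orbitSum n
        (Finsupp.equivFunOnFinite.symm (Sum.elim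
          (fun i => if i ∈ I ∪ J then 1 else 0)
          (fun i => if i ∈ I then d i else if i ∈ K then e i else 0))) :=
  stmt13_general n I J K d e hIJ hJK hI hJ hd
end

section
/- With K_n = Λ_{F_2}(a_1,...,a_n) ⊗ F_2[b_1,...,b_n] and the simultaneous permutation Σ_n-action, if k is not a power of 2 and 1 ≤ k ≤ n, then for any e ≥ 0 the orbit sum [a_1⋯a_k b_1^e⋯b_k^e] is decomposable in L_n = K_n^{Σ_n}: there exists 0 < i < k with [a_1⋯a_i b_1^e⋯b_i^e] · [a_{i+1}⋯a_k b_{i+1}^e⋯b_k^e] = [a_1⋯a_k b_1^e⋯b_k^e]. -/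
open MvPolynomial

/-- The exponent vector of the monomial `a_{low+1}⋯a_{high} b_{low+1}^e⋯b_{high}^e`
(indices `j` with `low ≤ j < high`). -/
noncomputable def segMonomial (n low high e : ℕ) : (Fin n ⊕ Fin n) →₀ ℕ :=
  Finsupp.equivFunOnFinite.symm (Sum.elim
    (fun i : Fin n => if low ≤ (i : ℕ) ∧ (i : ℕ) < high then 1 else 0)
    (fun i : Fin n => if low ≤ (i : ℕ) ∧ (i : ℕ) < high then e else 0))

/-!
Since `a_i ^ 2 = 0`, the product of `a_S b_S^e` and `a_T b_T^e` is `a_{S ∪ T} b_{S ∪ T}^e` when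
`S` and `T` are disjoint and `0` otherwise. Every `(i + j)`-subset splits in `C(i + j, i)` ways
into disjoint `i`- and `j`-subsets, so the orbit sums `P_r = [a_1⋯a_r b_1^e⋯b_r^e]` satisfy
`P_i P_j = C(i + j, i) P_{i + j}`. If `k = 2^m q` with `q > 1` odd, Lucas' theorem
gives `C(k, 2^m) ≡ q ≡ 1 (mod 2)`, so `i = 2^m` works.
-/

open Finset

namespace Nat

theorem choose_pow_mul_pow_modEq (p : ℕ) [hp : Fact p.Prime] (m q : ℕ) :
    (p ^ m * q).choose (p ^ m) ≡ q [MOD p] := by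
  induction m with
  | zero => simp [Nat.ModEq.refl]
  | succ m ih =>
    refine Choose.choose_modEq_choose_mod_mul_choose_div_nat.trans ?_
    rw [pow_succ', mul_assoc, Nat.mul_mod_right, Nat.mul_mod_right,
      Nat.mul_div_cancel_left _ hp.out.pos, Nat.mul_div_cancel_left _ hp.out.pos,
      Nat.choose_zero_right, one_mul]
    exact ih

theorem exists_odd_choose_of_not_two_pow {k : ℕ} (hk : k ≠ 0) (hpow : ¬ ∃ m : ℕ, k = 2 ^ m) :
    ∃ i, 0 < i ∧ i < k ∧ Odd (k.choose i) := by
  obtain ⟨m, q, hq, rfl⟩ := exists_eq_two_pow_mul_odd hk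
  have hq1 : q ≠ 1 := by rintro rfl; exact hpow ⟨m, mul_one _⟩
  have hpos : 0 < 2 ^ m := by positivity
  refine ⟨2 ^ m, hpos, ?_, ?_⟩
  · have : 1 < q := by obtain ⟨r, rfl⟩ := hq; omega
    exact lt_mul_of_one_lt_right hpos this
  · have : Fact (Nat.Prime 2) := ⟨Nat.prime_two⟩
    rw [Nat.odd_iff, choose_pow_mul_pow_modEq 2 m q]
    exact Nat.odd_iff.mp hq

end Nat

namespace Finset

theorem image_univ_perm_image_eq_powersetCard {α : Type*} [Fintype α] [DecidableEq α]
    (S : Finset α) :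
    univ.image (fun g : Equiv.Perm α => S.image g) = powersetCard S.card univ := by
  ext T
  simp only [mem_image, mem_univ, true_and, mem_powersetCard, subset_univ]
  constructor
  · rintro ⟨g, rfl⟩
    exact card_image_of_injective _ g.injective
  · intro hT
    let g := (S.equivOfCardEq hT.symm).extendSubtype
    refine ⟨g, eq_of_subset_of_card_le ?_ (by rw [card_image_of_injective _ g.injective, hT])⟩
    intro y hy
    obtain ⟨x, hx, rfl⟩ := mem_image.mp hy
    exact Equiv.extendSubtype_mem _ x hx

theorem sum_powersetCard_disjoint_union {α M : Type*} [DecidableEq α] [AddCommMonoid M]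
    (s : Finset α) (i j : ℕ) (f : Finset α → M) :
    ∑ S ∈ s.powersetCard i, ∑ T ∈ s.powersetCard j, (if Disjoint S T then f (S ∪ T) else 0) =
      (i + j).choose i • ∑ U ∈ s.powersetCard (i + j), f U := by
  have hcount : ∀ U ∈ s.powersetCard (i + j), (i + j).choose i • f U =
      ∑ S ∈ U.powersetCard i, f U := by
    intro U hU
    rw [sum_const, card_powersetCard, (mem_powersetCard.mp hU).2]
  rw [← sum_product', ← sum_filter, smul_sum, sum_congr rfl hcount, sum_sigma']
  refine sum_nbij' (fun p => ⟨p.1 ∪ p.2, p.1⟩) (fun q => (q.2, q.1 \ q.2)) ?_ ?_ ?_ ?_ ?_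
  · rintro ⟨S, T⟩ hST
    simp only [mem_filter, mem_product, mem_powersetCard] at hST
    obtain ⟨⟨⟨hSs, hS⟩, hTs, hT⟩, hST⟩ := hST
    simp only [mem_sigma, mem_powersetCard]
    exact ⟨⟨union_subset hSs hTs, by rw [card_union_of_disjoint hST, hS, hT]⟩,
      subset_union_left, hS⟩
  · rintro ⟨U, S⟩ hUS
    simp only [mem_sigma, mem_powersetCard] at hUS
    obtain ⟨⟨hUs, hU⟩, hSU, hS⟩ := hUS
    simp only [mem_filter, mem_product, mem_powersetCard]
    refine ⟨⟨⟨hSU.trans hUs, hS⟩, sdiff_subset.trans hUs, ?_⟩, disjoint_sdiff⟩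
    rw [card_sdiff_of_subset hSU, hU, hS, Nat.add_sub_cancel_left]
  · rintro ⟨S, T⟩ hST
    simp only [mem_filter] at hST
    simp [union_sdiff_cancel_left hST.2]
  · rintro ⟨U, S⟩ hUS
    simp only [mem_sigma, mem_powersetCard] at hUS
    simp [union_sdiff_of_subset hUS.2.1]
  · intro _ _
    rfl

end Finset

namespace Kn

noncomputable def subsetExponent (n e : ℕ) (S : Finset (Fin n)) : (Fin n ⊕ Fin n) →₀ ℕ :=
  Finsupp.equivFunOnFinite.symm
    (Sum.elim (fun i => if i ∈ S then 1 else 0) (fun i => if i ∈ S then e else 0))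

variable {n e : ℕ}

@[simp]
theorem subsetExponent_inl (S : Finset (Fin n)) (i : Fin n) :
    subsetExponent n e S (Sum.inl i) = if i ∈ S then 1 else 0 := rfl

@[simp]
theorem subsetExponent_inr (S : Finset (Fin n)) (i : Fin n) :
    subsetExponent n e S (Sum.inr i) = if i ∈ S then e else 0 := rfl

theorem subsetExponent_injective : Function.Injective (subsetExponent n e) := by
  intro S T h
  ext i
  have hi : subsetExponent n e S (Sum.inl i) = subsetExponent n e T (Sum.inl i) := by rw [h]
  by_cases hS : i ∈ S <;> by_cases hT : i ∈ T <;> simp [hS, hT] at hi ⊢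

theorem subsetExponent_union {S T : Finset (Fin n)} (h : Disjoint S T) :
    subsetExponent n e (S ∪ T) = subsetExponent n e S + subsetExponent n e T := by
  ext (i | i) <;> by_cases hS : i ∈ S <;> by_cases hT : i ∈ T <;> simp_all [disjoint_left]

theorem equivMapDomain_subsetExponent (g : Equiv.Perm (Fin n)) (S : Finset (Fin n)) :
    Finsupp.equivMapDomain (Equiv.sumCongr g g) (subsetExponent n e S) =
      subsetExponent n e (S.image g) := by
  ext (i | i) <;> simp [Finsupp.equivMapDomain_apply, ← Equiv.eq_symm_apply]

theorem segMonomial_eq_subsetExponent (low high : ℕ) :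
    segMonomial n low high e =
      subsetExponent n e (univ.filter fun i : Fin n => low ≤ (i : ℕ) ∧ (i : ℕ) < high) := by
  ext (i | i) <;> simp [segMonomial]

theorem card_filter_le_and_lt {low high : ℕ} (h : high ≤ n) :
    (univ.filter fun i : Fin n => low ≤ (i : ℕ) ∧ (i : ℕ) < high).card = high - low := by
  rw [← Nat.card_Ico, ← card_image_of_injective _ Fin.val_injective]
  congr 1
  ext x
  simp only [mem_image, mem_filter, mem_univ, true_and, mem_Ico]
  exact ⟨fun ⟨i, hi, hx⟩ => hx ▸ hi, fun hx => ⟨⟨x, hx.2.trans_le h⟩, hx, rfl⟩⟩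

noncomputable def subsetMonomial (n e : ℕ) (S : Finset (Fin n)) : Kn n :=
  Ideal.Quotient.mk (sqIdealK n) (monomial (subsetExponent n e S) 1)

noncomputable def powersetSum (n e r : ℕ) : Kn n :=
  ∑ S ∈ powersetCard r univ, subsetMonomial n e S

theorem orbitSum_subsetExponent (S : Finset (Fin n)) :
    orbitSum n (subsetExponent n e S) = powersetSum n e S.card := by
  have horbit : univ.image (fun g : Equiv.Perm (Fin n) => subsetExponent n e (S.image g)) =
      (powersetCard S.card univ).image (subsetExponent n e) := by
    rw [← image_univ_perm_image_eq_powersetCard, image_image]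
    rfl
  simp only [orbitSum, equivMapDomain_subsetExponent, powersetSum, subsetMonomial, horbit,
    map_sum]
  exact sum_image fun S _ T _ h => subsetExponent_injective h

theorem orbitSum_segMonomial {low high : ℕ} (h : high ≤ n) :
    orbitSum n (segMonomial n low high e) = powersetSum n e (high - low) := by
  rw [segMonomial_eq_subsetExponent, orbitSum_subsetExponent, card_filter_le_and_lt h]

theorem subsetMonomial_mul (S T : Finset (Fin n)) :
    subsetMonomial n e S * subsetMonomial n e T =
      if Disjoint S T then subsetMonomial n e (S ∪ T) else 0 := by
  rw [subsetMonomial, subsetMonomial, ← map_mul, monomial_mul, one_mul]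
  split_ifs with h
  · rw [subsetMonomial, subsetExponent_union h]
  obtain ⟨a, haS, haT⟩ := not_disjoint_iff.mp h
  -- a common index `a` makes the product divisible by `a_a ^ 2`
  have hle : Finsupp.single (Sum.inl a) 2 ≤ subsetExponent n e S + subsetExponent n e T := by
    simp [Finsupp.single_le_iff, haS, haT]
  rw [Ideal.Quotient.eq_zero_iff_mem, ← add_tsub_cancel_of_le hle, ← one_mul (1 : ZMod 2),
    ← monomial_mul, ← X_pow_eq_monomial]
  exact Ideal.mul_mem_right _ _ (Ideal.subset_span ⟨a, rfl⟩)

theorem powersetSum_mul (i j : ℕ) :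
    powersetSum n e i * powersetSum n e j = (i + j).choose i • powersetSum n e (i + j) := by
  simp only [powersetSum, sum_mul_sum, subsetMonomial_mul]
  exact sum_powersetCard_disjoint_union univ i j (subsetMonomial n e)

end Kn

/-- if `1 ≤ k ≤ n` and `k` is not a power of `2`, then for any `e ≥ 0` the
orbit sum `[a_1⋯a_k b_1^e⋯b_k^e]` is decomposable in `L_n`: there is `0 < i < k` with
`[a_1⋯a_i b_1^e⋯b_i^e] · [a_{i+1}⋯a_k b_{i+1}^e⋯b_k^e] = [a_1⋯a_k b_1^e⋯b_k^e]`. -/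
theorem stmt14 (n k e : ℕ) (hk1 : 1 ≤ k) (hkn : k ≤ n) (hpow : ¬ ∃ m : ℕ, k = 2 ^ m) :
    ∃ i : ℕ, 0 < i ∧ i < k ∧
      orbitSum n (segMonomial n 0 i e) * orbitSum n (segMonomial n i k e) =
        orbitSum n (segMonomial n 0 k e) := by
  obtain ⟨i, hi0, hik, hodd⟩ := Nat.exists_odd_choose_of_not_two_pow (by omega) hpow
  refine ⟨i, hi0, hik, ?_⟩
  rw [Kn.orbitSum_segMonomial (hik.le.trans hkn), Kn.orbitSum_segMonomial hkn,
    Kn.orbitSum_segMonomial hkn, Kn.powersetSum_mul, Nat.sub_zero, Nat.sub_zero,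
    Nat.add_sub_cancel' hik.le, nsmul_eq_mul,
    ← map_natCast (algebraMap (ZMod 2) (Kn n)), hodd.natCast_zmod_two, map_one, one_mul]
end

section
/- Grade K_n = Λ_{F_2}(a_1,...,a_n) ⊗ F_2[b_1,...,b_n] by deg(a_i) = 1, deg(b_i) = 2. Then the surjection L_{n+1} → L_n (sending a_{n+1}, b_{n+1} to 0) restricted to invariants is an isomorphism of graded vector spaces in all degrees ≤ n. -/
open MvPolynomial

/-- The degree-`d` homogeneous component of `K_n`, for the grading with `deg aᵢ = 1`,
`deg bᵢ = 2`: the span of (images of) monomials of weighted degree `d`. -/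
noncomputable def degComp (n d : ℕ) : Submodule (ZMod 2) (Kn n) :=
  Submodule.span (ZMod 2)
    {x | ∃ μ : (Fin n ⊕ Fin n) →₀ ℕ,
      ((∑ i : Fin n, μ (Sum.inl i)) + 2 * ∑ i : Fin n, μ (Sum.inr i)) = d ∧
      x = Ideal.Quotient.mk (sqIdealK n) (monomial μ (1 : ZMod 2))}

/-- The algebra map `K_{n+1} → K_n` sending `a_{n+1}` and `b_{n+1}` to `0` and all other
variables to themselves. -/
noncomputable def truncMap (n : ℕ) : Kn (n + 1) →ₐ[ZMod 2] Kn n :=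
  Ideal.Quotient.liftₐ (sqIdealK (n + 1))
    ((Ideal.Quotient.mkₐ (ZMod 2) (sqIdealK n)).comp
      (aeval (Sum.elim
        (fun i : Fin (n + 1) =>
          if h : (i : ℕ) < n then (X (Sum.inl ⟨(i : ℕ), h⟩) :
            MvPolynomial (Fin n ⊕ Fin n) (ZMod 2)) else 0)
        (fun i : Fin (n + 1) =>
          if h : (i : ℕ) < n then (X (Sum.inr ⟨(i : ℕ), h⟩) :
            MvPolynomial (Fin n ⊕ Fin n) (ZMod 2)) else 0))))
    (by
      intro a ha
      refine Submodule.span_induction ?_ ?_ ?_ ?_ ha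
      · rintro _ ⟨i, rfl⟩
        rw [AlgHom.comp_apply, map_pow, aeval_X, Ideal.Quotient.mkₐ_eq_mk]
        simp only [Sum.elim_inl]
        split_ifs with h
        · rw [Ideal.Quotient.eq_zero_iff_mem]
          exact Ideal.subset_span ⟨⟨(i : ℕ), h⟩, rfl⟩
        · rw [zero_pow (by norm_num), map_zero]
      · exact map_zero _
      · intro x y _ _ hx hy; rw [map_add, hx, hy, add_zero]
      · intro c x _ hx; rw [smul_eq_mul, map_mul, hx, mul_zero])

/-!
Work with *reduced* representatives: polynomials whose monomials are squarefree in the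
`a`-variables. They represent `K_n` faithfully, so invariance and homogeneity become conditions
on coefficients, and the truncation becomes `killCompl` along `Fin n ↪ Fin (n + 1)`: it reads off
the coefficients of the monomials avoiding the last index.

A monomial of degree `d ≤ n` involves at most `d` of the `n + 1` indices, so a transposition
moves it to one avoiding the last index; hence an invariant of degree `d` with zero truncation
vanishes. Conversely, an invariant `q` in `n` variables lifts by giving each monomial the
coefficient of `q` at any representative of its `Σ_{n+1}`-orbit avoiding the last index. This is
well defined: if `k ∈ Σ_{n+1}` relates two such representatives, so does `τ * k` with `τ` the
transposition of `k (n + 1)` and `n + 1`, and `τ * k` fixes the last index, so it comes from `Σ_n`.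
-/

namespace DiagonalInvariants

open Equiv Finsupp

section Exponents

variable {ι : Type*}

def permExp (g : Perm ι) (μ : ι ⊕ ι →₀ ℕ) : ι ⊕ ι →₀ ℕ :=
  equivMapDomain (sumCongr g g) μ

@[simp]
lemma permExp_apply_inl (g : Perm ι) (μ : ι ⊕ ι →₀ ℕ) (i : ι) :
    permExp g μ (Sum.inl i) = μ (Sum.inl (g⁻¹ i)) := rfl

@[simp]
lemma permExp_apply_inr (g : Perm ι) (μ : ι ⊕ ι →₀ ℕ) (i : ι) :
    permExp g μ (Sum.inr i) = μ (Sum.inr (g⁻¹ i)) := rfl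

lemma permExp_mul (g h : Perm ι) (μ : ι ⊕ ι →₀ ℕ) :
    permExp (g * h) μ = permExp g (permExp h μ) := by
  ext (i | i) <;> rfl

@[simp]
lemma permExp_one (μ : ι ⊕ ι →₀ ℕ) : permExp 1 μ = μ := by
  ext (i | i) <;> rfl

@[simp]
lemma permExp_inv_permExp (g : Perm ι) (μ : ι ⊕ ι →₀ ℕ) : permExp g⁻¹ (permExp g μ) = μ := by
  rw [← permExp_mul, inv_mul_cancel, permExp_one]

@[simp]
lemma permExp_permExp_inv (g : Perm ι) (μ : ι ⊕ ι →₀ ℕ) : permExp g (permExp g⁻¹ μ) = μ := by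
  rw [← permExp_mul, mul_inv_cancel, permExp_one]

lemma permExp_eq_mapDomain (g : Perm ι) (μ : ι ⊕ ι →₀ ℕ) :
    permExp g μ = mapDomain (Sum.map g g) μ :=
  equivMapDomain_eq_mapDomain _ _

lemma permExp_swap_of_eq_zero [DecidableEq ι] {μ : ι ⊕ ι →₀ ℕ} {a b : ι}
    (ha : μ (Sum.inl a) = 0 ∧ μ (Sum.inr a) = 0) (hb : μ (Sum.inl b) = 0 ∧ μ (Sum.inr b) = 0) :
    permExp (swap a b) μ = μ := by
  ext (i | i) <;>
  · simp only [permExp_apply_inl, permExp_apply_inr, swap_inv, swap_apply_def]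
    split_ifs <;> simp_all

lemma permExp_mapDomain {κ : Type*} {f : ι → κ} {k : Perm κ} {h : Perm ι}
    (hf : ∀ i, k (f i) = f (h i)) (μ : ι ⊕ ι →₀ ℕ) :
    permExp k (mapDomain (Sum.map f f) μ) = mapDomain (Sum.map f f) (permExp h μ) := by
  have hcomm : Sum.map k k ∘ Sum.map f f = Sum.map f f ∘ Sum.map h h := by
    ext (i | i) <;> simp [hf]
  rw [permExp_eq_mapDomain, permExp_eq_mapDomain, ← mapDomain_comp, ← mapDomain_comp, hcomm]

def IsAdmissible (μ : ι ⊕ ι →₀ ℕ) : Prop := ∀ i, μ (Sum.inl i) ≤ 1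

lemma IsAdmissible.permExp {μ : ι ⊕ ι →₀ ℕ} (hμ : IsAdmissible μ) (g : Perm ι) :
    IsAdmissible (permExp g μ) :=
  fun i => hμ (g⁻¹ i)

variable (ι) in
abbrev degWeight : ι ⊕ ι → ℕ := Sum.elim (fun _ => 1) (fun _ => 2)

variable [Fintype ι]

lemma weight_degWeight (μ : ι ⊕ ι →₀ ℕ) :
    weight (degWeight ι) μ = ∑ i, μ (Sum.inl i) + 2 * ∑ i, μ (Sum.inr i) := by
  simp [weight_eq_sum, Fintype.sum_sum_type, Finset.mul_sum, mul_comm]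

lemma weight_permExp (g : Perm ι) (μ : ι ⊕ ι →₀ ℕ) :
    weight (degWeight ι) (permExp g μ) = weight (degWeight ι) μ := by
  simp only [weight_degWeight, permExp_apply_inl, permExp_apply_inr,
    Equiv.sum_comp g⁻¹ (fun i => μ (Sum.inl i)), Equiv.sum_comp g⁻¹ (fun i => μ (Sum.inr i))]

lemma exists_eq_zero_of_weight_lt_card {μ : ι ⊕ ι →₀ ℕ}
    (hμ : weight (degWeight ι) μ < Fintype.card ι) :
    ∃ j, μ (Sum.inl j) = 0 ∧ μ (Sum.inr j) = 0 := by
  by_contra! hne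
  have hpos : ∀ j, 1 ≤ μ (Sum.inl j) + 2 * μ (Sum.inr j) := fun j => by
    have := hne j; omega
  have := Finset.sum_le_sum fun j (_ : j ∈ Finset.univ) => hpos j
  rw [Finset.sum_add_distrib, ← Finset.mul_sum, ← weight_degWeight] at this
  simp only [Finset.sum_const, Finset.card_univ, smul_eq_mul, mul_one] at this
  omega

end Exponents

section Extension

variable {n : ℕ}

variable (n) in
def embVar : Fin n ⊕ Fin n → Fin (n + 1) ⊕ Fin (n + 1) := Sum.map Fin.castSucc Fin.castSucc

lemma embVar_injective : Function.Injective (embVar n) :=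
  (Fin.castSucc_injective n).sumMap (Fin.castSucc_injective n)

noncomputable def extendExp (μ : Fin n ⊕ Fin n →₀ ℕ) : Fin (n + 1) ⊕ Fin (n + 1) →₀ ℕ :=
  mapDomain (embVar n) μ

lemma extendExp_injective : Function.Injective (extendExp (n := n)) :=
  mapDomain_injective embVar_injective

@[simp]
lemma extendExp_apply_inl_castSucc (μ : Fin n ⊕ Fin n →₀ ℕ) (i : Fin n) :
    extendExp μ (Sum.inl i.castSucc) = μ (Sum.inl i) :=
  mapDomain_apply embVar_injective μ (Sum.inl i)

@[simp]
lemma extendExp_apply_inr_castSucc (μ : Fin n ⊕ Fin n →₀ ℕ) (i : Fin n) :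
    extendExp μ (Sum.inr i.castSucc) = μ (Sum.inr i) :=
  mapDomain_apply embVar_injective μ (Sum.inr i)

lemma inl_last_notMem_range_embVar : Sum.inl (Fin.last n) ∉ Set.range (embVar n) := by
  rintro ⟨i | i, h⟩ <;> simp [embVar, Fin.castSucc_ne_last] at h

lemma inr_last_notMem_range_embVar : Sum.inr (Fin.last n) ∉ Set.range (embVar n) := by
  rintro ⟨i | i, h⟩ <;> simp [embVar, Fin.castSucc_ne_last] at h

@[simp]
lemma extendExp_apply_inl_last (μ : Fin n ⊕ Fin n →₀ ℕ) :
    extendExp μ (Sum.inl (Fin.last n)) = 0 :=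
  mapDomain_of_notMem_range μ _ inl_last_notMem_range_embVar

@[simp]
lemma extendExp_apply_inr_last (μ : Fin n ⊕ Fin n →₀ ℕ) :
    extendExp μ (Sum.inr (Fin.last n)) = 0 :=
  mapDomain_of_notMem_range μ _ inr_last_notMem_range_embVar

lemma exists_extendExp_eq {ν : Fin (n + 1) ⊕ Fin (n + 1) →₀ ℕ}
    (hl : ν (Sum.inl (Fin.last n)) = 0) (hr : ν (Sum.inr (Fin.last n)) = 0) :
    ∃ μ, extendExp μ = ν := by
  refine ⟨comapDomain (embVar n) ν embVar_injective.injOn, ?_⟩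
  ext (i | i) <;> induction i using Fin.lastCases <;> simp [hl, hr, embVar]

lemma weight_extendExp (μ : Fin n ⊕ Fin n →₀ ℕ) :
    weight (degWeight _) (extendExp μ) = weight (degWeight _) μ := by
  simp [weight_degWeight, Fin.sum_univ_castSucc]

lemma isAdmissible_extendExp_iff {μ : Fin n ⊕ Fin n →₀ ℕ} :
    IsAdmissible (extendExp μ) ↔ IsAdmissible μ := by
  simp [IsAdmissible, Fin.forall_fin_succ']

lemma exists_perm_castSucc_comm (g : Perm (Fin n)) :
    ∃ k : Perm (Fin (n + 1)), ∀ i, k i.castSucc = (g i).castSucc :=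
  ⟨(finSuccEquivLast.trans g.optionCongr).trans finSuccEquivLast.symm, fun i => by simp⟩

lemma exists_perm_castSucc_comm_of_apply_last {k : Perm (Fin (n + 1))}
    (hk : k (Fin.last n) = Fin.last n) :
    ∃ g : Perm (Fin n), ∀ i, k i.castSucc = (g i).castSucc := by
  have hne : ∀ i : Fin n, k i.castSucc ≠ Fin.last n := fun i h =>
    Fin.castSucc_ne_last i (k.injective (h.trans hk.symm))
  exact ⟨Equiv.ofBijective (fun i => (k i.castSucc).castPred (hne i))
    (Finite.injective_iff_bijective.1 fun a b hab => Fin.castSucc_injective n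
      (k.injective (by simpa using congrArg Fin.castSucc hab))), fun i => by simp⟩

lemma permExp_extendExp {k : Perm (Fin (n + 1))} {g : Perm (Fin n)}
    (hk : ∀ i, k i.castSucc = (g i).castSucc) (μ : Fin n ⊕ Fin n →₀ ℕ) :
    permExp k (extendExp μ) = extendExp (permExp g μ) :=
  permExp_mapDomain hk μ

lemma exists_permExp_eq_of_permExp_extendExp_eq {k : Perm (Fin (n + 1))}
    {μ μ' : Fin n ⊕ Fin n →₀ ℕ} (h : permExp k (extendExp μ) = extendExp μ') :
    ∃ g, μ' = permExp g μ := by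
  classical
  set s := swap (k (Fin.last n)) (Fin.last n)
  have hs : permExp s (extendExp μ') = extendExp μ' := by
    refine permExp_swap_of_eq_zero ?_ (by simp)
    simp [← h]
  have hlast : (s * k) (Fin.last n) = Fin.last n := by simp [s]
  obtain ⟨g, hg⟩ := exists_perm_castSucc_comm_of_apply_last hlast
  refine ⟨g, extendExp_injective ?_⟩
  rw [← permExp_extendExp hg, permExp_mul, h, hs]

lemma exists_permExp_eq_extendExp {ν : Fin (n + 1) ⊕ Fin (n + 1) →₀ ℕ}
    (hν : weight (degWeight _) ν ≤ n) : ∃ g μ, extendExp μ = permExp g ν := by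
  classical
  obtain ⟨j, hj⟩ := exists_eq_zero_of_weight_lt_card (hν.trans_lt (by simp))
  refine ⟨swap j (Fin.last n), exists_extendExp_eq ?_ ?_⟩ <;> simp [hj]

end Extension

section Polynomials

variable {R : Type*} [CommSemiring R] {ι : Type*}

lemma coeff_permExp_rename (g : Perm ι) (p : MvPolynomial (ι ⊕ ι) R) (μ : ι ⊕ ι →₀ ℕ) :
    coeff (permExp g μ) (rename (Sum.map g g) p) = coeff μ p := by
  rw [permExp_eq_mapDomain]
  exact coeff_rename_mapDomain _ (g.injective.sumMap g.injective) p μ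

def IsInvariant (p : MvPolynomial (ι ⊕ ι) R) : Prop :=
  ∀ g : Perm ι, rename (Sum.map g g) p = p

lemma isInvariant_iff_coeff {p : MvPolynomial (ι ⊕ ι) R} :
    IsInvariant p ↔ ∀ g μ, coeff (permExp g μ) p = coeff μ p := by
  refine ⟨fun hp g μ => by rw [← coeff_permExp_rename g p μ, hp g], fun hp g => ?_⟩
  ext μ
  calc coeff μ (rename (Sum.map g g) p)
      = coeff (permExp g (permExp g⁻¹ μ)) (rename (Sum.map g g) p) := by rw [permExp_permExp_inv]
    _ = coeff μ p := by rw [coeff_permExp_rename, ← hp g, permExp_permExp_inv]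

def IsReduced (p : MvPolynomial (ι ⊕ ι) R) : Prop := ∀ μ ∈ p.support, IsAdmissible μ

lemma IsReduced.rename {p : MvPolynomial (ι ⊕ ι) R} (hp : IsReduced p) (g : Perm ι) :
    IsReduced (rename (Sum.map g g) p) := by
  intro μ hμ
  rw [MvPolynomial.mem_support_iff, ← permExp_permExp_inv g μ, coeff_permExp_rename] at hμ
  simpa using (hp _ (MvPolynomial.mem_support_iff.2 hμ)).permExp g

open Classical in
noncomputable def reduce (p : MvPolynomial (ι ⊕ ι) R) : MvPolynomial (ι ⊕ ι) R :=
  AddMonoidAlgebra.ofCoeff ((AddMonoidAlgebra.coeff p).filter IsAdmissible)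

open Classical in
lemma coeff_reduce (p : MvPolynomial (ι ⊕ ι) R) (μ : ι ⊕ ι →₀ ℕ) :
    coeff μ (reduce p) = if IsAdmissible μ then coeff μ p else 0 :=
  filter_apply _ _ _

lemma isReduced_reduce (p : MvPolynomial (ι ⊕ ι) R) : IsReduced (reduce p) := fun μ hμ => by
  classical
  rw [MvPolynomial.mem_support_iff, coeff_reduce] at hμ
  by_contra h
  exact hμ (if_neg h)

lemma isWeightedHomogeneous_reduce {w : ι ⊕ ι → ℕ} {p : MvPolynomial (ι ⊕ ι) R} {d : ℕ}
    (hp : IsWeightedHomogeneous w p d) : IsWeightedHomogeneous w (reduce p) d := fun μ hμ => by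
  classical
  rw [coeff_reduce] at hμ
  split_ifs at hμ
  · exact hp hμ
  · exact absurd rfl hμ

end Polynomials

section Truncation

variable {R : Type*} [CommSemiring R] {n : ℕ}

lemma coeff_killCompl_embVar (p : MvPolynomial (Fin (n + 1) ⊕ Fin (n + 1)) R)
    (μ : Fin n ⊕ Fin n →₀ ℕ) :
    coeff μ (killCompl embVar_injective p) = coeff (extendExp μ) p :=
  coeff_killCompl _

lemma isInvariant_killCompl {p : MvPolynomial (Fin (n + 1) ⊕ Fin (n + 1)) R}
    (hp : IsInvariant p) : IsInvariant (killCompl embVar_injective p) := by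
  rw [isInvariant_iff_coeff] at hp ⊢
  intro g μ
  obtain ⟨k, hk⟩ := exists_perm_castSucc_comm g
  rw [coeff_killCompl_embVar, coeff_killCompl_embVar, ← permExp_extendExp hk, hp]

lemma isReduced_killCompl {p : MvPolynomial (Fin (n + 1) ⊕ Fin (n + 1)) R}
    (hp : IsReduced p) : IsReduced (killCompl embVar_injective p) := fun μ hμ => by
  rw [MvPolynomial.mem_support_iff, coeff_killCompl_embVar, ← MvPolynomial.mem_support_iff] at hμ
  exact isAdmissible_extendExp_iff.1 (hp _ hμ)

lemma isWeightedHomogeneous_killCompl {p : MvPolynomial (Fin (n + 1) ⊕ Fin (n + 1)) R} {d : ℕ}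
    (hp : IsWeightedHomogeneous (degWeight _) p d) :
    IsWeightedHomogeneous (degWeight _) (killCompl embVar_injective p) d := fun μ hμ => by
  rw [coeff_killCompl_embVar] at hμ
  rw [← weight_extendExp]
  exact hp hμ

lemma eq_zero_of_killCompl_eq_zero {p : MvPolynomial (Fin (n + 1) ⊕ Fin (n + 1)) R} {d : ℕ}
    (hi : IsInvariant p) (hh : IsWeightedHomogeneous (degWeight _) p d) (hd : d ≤ n)
    (h : killCompl embVar_injective p = 0) : p = 0 := by
  ext ν
  rw [coeff_zero]
  by_contra hν
  obtain ⟨g, μ, hμ⟩ := exists_permExp_eq_extendExp (hh hν ▸ hd)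
  apply hν
  rw [← isInvariant_iff_coeff.1 hi g, ← hμ, ← coeff_killCompl_embVar, h, coeff_zero]

open Classical in
noncomputable def liftCoeff (q : MvPolynomial (Fin n ⊕ Fin n) R)
    (ν : Fin (n + 1) ⊕ Fin (n + 1) →₀ ℕ) : R :=
  if h : ∃ g μ, extendExp μ = permExp g ν then coeff h.choose_spec.choose q else 0

variable {q : MvPolynomial (Fin n ⊕ Fin n) R}

lemma coeff_eq_of_extendExp_eq_permExp (hq : IsInvariant q) {g₁ g₂ : Perm (Fin (n + 1))}
    {μ₁ μ₂ : Fin n ⊕ Fin n →₀ ℕ} {ν : Fin (n + 1) ⊕ Fin (n + 1) →₀ ℕ}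
    (h₁ : extendExp μ₁ = permExp g₁ ν) (h₂ : extendExp μ₂ = permExp g₂ ν) :
    coeff μ₁ q = coeff μ₂ q := by
  obtain ⟨g, rfl⟩ := exists_permExp_eq_of_permExp_extendExp_eq (k := g₂ * g₁⁻¹)
    (μ := μ₁) (μ' := μ₂) (by rw [permExp_mul, h₁, permExp_inv_permExp, h₂])
  exact (isInvariant_iff_coeff.1 hq g μ₁).symm

lemma liftCoeff_eq (hq : IsInvariant q) {g : Perm (Fin (n + 1))} {μ : Fin n ⊕ Fin n →₀ ℕ}
    {ν : Fin (n + 1) ⊕ Fin (n + 1) →₀ ℕ} (h : extendExp μ = permExp g ν) :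
    liftCoeff q ν = coeff μ q := by
  have hex : ∃ g μ, extendExp μ = permExp g ν := ⟨g, μ, h⟩
  rw [liftCoeff, dif_pos hex]
  exact coeff_eq_of_extendExp_eq_permExp hq hex.choose_spec.choose_spec h

lemma liftCoeff_permExp (hq : IsInvariant q) (g : Perm (Fin (n + 1)))
    (ν : Fin (n + 1) ⊕ Fin (n + 1) →₀ ℕ) : liftCoeff q (permExp g ν) = liftCoeff q ν := by
  by_cases h : ∃ g' μ, extendExp μ = permExp g' ν
  · obtain ⟨g', μ, hμ⟩ := h
    rw [liftCoeff_eq hq hμ, liftCoeff_eq hq (g := g' * g⁻¹)]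
    rw [permExp_mul, permExp_inv_permExp, hμ]
  · have h' : ¬ ∃ g' μ, extendExp μ = permExp g' (permExp g ν) :=
      fun ⟨g', μ, hμ⟩ => h ⟨g' * g, μ, by rw [permExp_mul, hμ]⟩
    rw [liftCoeff, dif_neg h', liftCoeff, dif_neg h]

lemma liftCoeff_extendExp (hq : IsInvariant q) (μ : Fin n ⊕ Fin n →₀ ℕ) :
    liftCoeff q (extendExp μ) = coeff μ q :=
  liftCoeff_eq hq (g := 1) (permExp_one _).symm

lemma exists_of_liftCoeff_ne_zero {ν : Fin (n + 1) ⊕ Fin (n + 1) →₀ ℕ}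
    (h : liftCoeff q ν ≠ 0) : ∃ g μ, μ ∈ q.support ∧ ν = permExp g (extendExp μ) := by
  rw [liftCoeff] at h
  split_ifs at h with hex
  · exact ⟨hex.choose⁻¹, hex.choose_spec.choose, MvPolynomial.mem_support_iff.2 h,
      by rw [hex.choose_spec.choose_spec, permExp_inv_permExp]⟩
  · exact absurd rfl h

open Classical in
noncomputable def liftPoly (q : MvPolynomial (Fin n ⊕ Fin n) R) :
    MvPolynomial (Fin (n + 1) ⊕ Fin (n + 1)) R :=
  AddMonoidAlgebra.ofCoeff <| onFinset
    ((Finset.univ ×ˢ q.support).image fun gμ => permExp gμ.1 (extendExp gμ.2))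
    (liftCoeff q) fun ν hν => by
      obtain ⟨g, μ, hμ, rfl⟩ := exists_of_liftCoeff_ne_zero hν
      exact Finset.mem_image.2 ⟨(g, μ), by simpa using hμ, rfl⟩

lemma coeff_liftPoly (ν : Fin (n + 1) ⊕ Fin (n + 1) →₀ ℕ) :
    coeff ν (liftPoly q) = liftCoeff q ν :=
  rfl

lemma isInvariant_liftPoly (hq : IsInvariant q) : IsInvariant (liftPoly q) :=
  isInvariant_iff_coeff.2 fun g ν => by rw [coeff_liftPoly, coeff_liftPoly, liftCoeff_permExp hq]

lemma isWeightedHomogeneous_liftPoly {d : ℕ} (hq : IsWeightedHomogeneous (degWeight _) q d) :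
    IsWeightedHomogeneous (degWeight _) (liftPoly q) d := fun ν hν => by
  obtain ⟨g, μ, hμ, rfl⟩ := exists_of_liftCoeff_ne_zero hν
  rw [weight_permExp, weight_extendExp]
  exact hq (MvPolynomial.mem_support_iff.1 hμ)

lemma killCompl_liftPoly (hq : IsInvariant q) : killCompl embVar_injective (liftPoly q) = q := by
  ext μ
  rw [coeff_killCompl_embVar, coeff_liftPoly, liftCoeff_extendExp hq]

end Truncation

section Quotient

variable {n : ℕ}

lemma mem_sqIdealK_iff {p : MvPolynomial (Fin n ⊕ Fin n) (ZMod 2)} :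
    p ∈ sqIdealK n ↔ ∀ μ ∈ p.support, ¬ IsAdmissible μ := by
  have hspan : sqIdealK n = Ideal.span ((fun s => monomial s (1 : ZMod 2)) ''
      Set.range fun i : Fin n => single (Sum.inl i) 2) := by
    rw [sqIdealK, ← Set.range_comp]
    simp [Function.comp_def, X_pow_eq_monomial]
  rw [hspan, mem_ideal_span_monomial_image]
  simp [IsAdmissible, single_le_iff, Nat.lt_iff_add_one_le]

lemma IsReduced.eq_zero_of_mem {p : MvPolynomial (Fin n ⊕ Fin n) (ZMod 2)} (hp : IsReduced p)
    (h : p ∈ sqIdealK n) : p = 0 := by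
  rw [← MvPolynomial.support_eq_empty, Finset.eq_empty_iff_forall_notMem]
  exact fun μ hμ => mem_sqIdealK_iff.1 h μ hμ (hp μ hμ)

lemma IsReduced.eq_of_mk_eq {p q : MvPolynomial (Fin n ⊕ Fin n) (ZMod 2)} (hp : IsReduced p)
    (hq : IsReduced q) (h : Ideal.Quotient.mk (sqIdealK n) p = Ideal.Quotient.mk _ q) :
    p = q := by
  classical
  have hpq : IsReduced (p - q) := fun μ hμ =>
    (Finset.mem_union.1 (support_sub _ p q hμ)).elim (hp μ) (hq μ)
  exact sub_eq_zero.1 (hpq.eq_zero_of_mem (Ideal.Quotient.eq.1 h))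

lemma mk_reduce (p : MvPolynomial (Fin n ⊕ Fin n) (ZMod 2)) :
    Ideal.Quotient.mk (sqIdealK n) (reduce p) = Ideal.Quotient.mk _ p := by
  classical
  refine Ideal.Quotient.eq.2 (mem_sqIdealK_iff.2 fun μ hμ hadm => ?_)
  rw [MvPolynomial.mem_support_iff, coeff_sub, coeff_reduce, if_pos hadm, sub_self] at hμ
  exact hμ rfl

lemma permActK_mk (g : Perm (Fin n)) (p : MvPolynomial (Fin n ⊕ Fin n) (ZMod 2)) :
    permActK n g (Ideal.Quotient.mk _ p) = Ideal.Quotient.mk _ (rename (Sum.map g g) p) :=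
  rfl

lemma truncMap_mk (p : MvPolynomial (Fin (n + 1) ⊕ Fin (n + 1)) (ZMod 2)) :
    truncMap n (Ideal.Quotient.mk _ p) = Ideal.Quotient.mk _ (killCompl embVar_injective p) := by
  suffices h : (truncMap n).comp (Ideal.Quotient.mkₐ (ZMod 2) (sqIdealK (n + 1))) =
      (Ideal.Quotient.mkₐ (ZMod 2) (sqIdealK n)).comp (killCompl embVar_injective) from
    AlgHom.congr_fun h p
  refine MvPolynomial.algHom_ext fun i => ?_
  change Ideal.Quotient.mk _ (aeval _ (X i)) = Ideal.Quotient.mk _ (killCompl _ (X i))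
  -- `simp` cannot see `⟨Sum.inl i.castSucc, _⟩` as `⟨embVar n (Sum.inl i), _⟩`.
  rcases i with i | i <;> induction i using Fin.lastCases <;> simp [killCompl, embVar] <;>
    exact congrArg _ (congrArg X ((Equiv.symm_apply_eq _).2 rfl).symm)

lemma degComp_eq_map (d : ℕ) :
    degComp n d = (weightedHomogeneousSubmodule (ZMod 2) (degWeight _) d).map
      (Ideal.Quotient.mkₐ (ZMod 2) (sqIdealK n)).toLinearMap := by
  rw [weightedHomogeneousSubmodule_eq_finsupp_supported, AddMonoidAlgebra.supported_eq_span_single,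
    Submodule.map_span, degComp, ← Set.image_comp]
  congr 1
  ext x
  simp [weight_degWeight, eq_comm, single_eq_monomial]

lemma exists_rep_of_mem_Ln_degComp {d : ℕ} {x : Kn n} (hx : x ∈ Ln n) (hd : x ∈ degComp n d) :
    ∃ p, IsReduced p ∧ IsInvariant p ∧ IsWeightedHomogeneous (degWeight _) p d ∧
      Ideal.Quotient.mk (sqIdealK n) p = x := by
  rw [degComp_eq_map] at hd
  obtain ⟨p, hp, rfl⟩ := hd
  refine ⟨reduce p, isReduced_reduce p, fun g => ?_, isWeightedHomogeneous_reduce hp, mk_reduce p⟩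
  refine ((isReduced_reduce p).rename g).eq_of_mk_eq (isReduced_reduce p) ?_
  rw [← permActK_mk, mk_reduce]
  exact hx g

lemma mk_mem_Ln_degComp {d : ℕ} {p : MvPolynomial (Fin n ⊕ Fin n) (ZMod 2)}
    (hi : IsInvariant p) (hh : IsWeightedHomogeneous (degWeight _) p d) :
    Ideal.Quotient.mk (sqIdealK n) p ∈ Ln n ∧ Ideal.Quotient.mk (sqIdealK n) p ∈ degComp n d :=
  ⟨fun g => by rw [permActK_mk, hi g], by rw [degComp_eq_map]; exact ⟨p, hh, rfl⟩⟩

end Quotient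

end DiagonalInvariants

/-- the surjection `L_{n+1} → L_n` (restriction of `K_{n+1} → K_n` killing
`a_{n+1}`, `b_{n+1}`) is a bijection between the degree-`d` graded pieces of the invariant
rings, in every degree `d ≤ n` (grading: `deg aᵢ = 1`, `deg bᵢ = 2`). -/
theorem stmt16 (n d : ℕ) (hd : d ≤ n) :
    Set.BijOn (truncMap n)
      {x : Kn (n + 1) | x ∈ Ln (n + 1) ∧ x ∈ degComp (n + 1) d}
      {x : Kn n | x ∈ Ln n ∧ x ∈ degComp n d} := by
  open DiagonalInvariants in
  refine ⟨?mapsTo, ?injOn, ?surjOn⟩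
  case mapsTo =>
    rintro _ ⟨hx, hdeg⟩
    obtain ⟨p, -, hi, hh, rfl⟩ := exists_rep_of_mem_Ln_degComp hx hdeg
    rw [truncMap_mk]
    exact mk_mem_Ln_degComp (isInvariant_killCompl hi) (isWeightedHomogeneous_killCompl hh)
  case injOn =>
    refine LinearMap.injOn_of_disjoint_ker (f := (truncMap n).toLinearMap)
      (p := Subalgebra.toSubmodule (Ln (n + 1)) ⊓ degComp (n + 1) d) subset_rfl ?_
    rw [Submodule.disjoint_def]
    rintro _ ⟨hx, hdeg⟩ hker
    obtain ⟨p, hr, hi, hh, rfl⟩ := exists_rep_of_mem_Ln_degComp hx hdeg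
    rw [LinearMap.mem_ker, AlgHom.toLinearMap_apply, truncMap_mk,
      Ideal.Quotient.eq_zero_iff_mem] at hker
    rw [eq_zero_of_killCompl_eq_zero hi hh hd ((isReduced_killCompl hr).eq_zero_of_mem hker),
      map_zero]
  case surjOn =>
    rintro _ ⟨hx, hdeg⟩
    obtain ⟨q, -, hi, hh, rfl⟩ := exists_rep_of_mem_Ln_degComp hx hdeg
    exact ⟨_, mk_mem_Ln_degComp (isInvariant_liftPoly hi) (isWeightedHomogeneous_liftPoly hh),
      by rw [truncMap_mk, killCompl_liftPoly hi]⟩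
end
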